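/- arXiv:math/0209136 — 3 statements merged into one kernel-verified Lean document; each statement's English description precedes it below -/
import Mathlib

section
/- Fix nonnegative integers c, d and a word w of length c+d in the letters h and v containing exactly c letters h and d letters v. Let μ and ν be partitions each having at most c parts larger than d, with w-notations μ^w = (μ^w_1, …, μ^w_{c+d}) and ν^w = (ν^w_1, …, ν^w_{c+d}). Then there exists a partition π whose w-notation is π^w_i = μ^w_i + ν^w_i for all i, and the Littlewood–Richardson coefficient c^π_{μν} is nonzero (i.e. s_π appears in the Schur expansion of s_μ s_ν). -/
open scoped Classical

/-!  Common definitions: the ring `Λ` of symmetric functions is realized inside the ring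
`MvPowerSeries ℕ ℚ` of formal power series in countably many variables `x₀, x₁, x₂, …`
with rational coefficients; Schur functions are defined by their monomial expansion over
semistandard Young tableaux, and Littlewood–Richardson coefficients are defined as the
number of Littlewood–Richardson fillings (semistandard skew fillings whose reverse reading
word is a lattice word), which is the coefficient of `s_ν` in `s_lam ⬝ s_μ`. -/

/-- The Schur function `s_μ` of a Young diagram `μ`: the coefficient of the monomial `x^m`
is the number of semistandard Young tableaux of shape `μ` with weight `m`. -/
noncomputable def schur (μ : YoungDiagram) : MvPowerSeries ℕ ℚ :=
  fun m : ℕ →₀ ℕ =>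
    (Set.ncard {T : SemistandardYoungTableau μ |
        ∀ k : ℕ, (μ.cells.filter fun c => T c.1 c.2 = k).card = m k} : ℚ)

/-- A Littlewood–Richardson filling of the skew shape `ν/lam` with content `μ`:
a filling of the cells of `ν` not in `lam` with entries `0, 1, 2, …` that is weakly
increasing along rows, strictly increasing down columns, in which the entry `k` occurs
`μ.rowLen k` times, and such that reading right-to-left along rows, top to bottom, every
initial segment contains at least as many `k`'s as `(k+1)`'s (the lattice word condition). -/
structure LRFilling (ν lam μ : YoungDiagram) : Type where
  le : lam ≤ ν
  entry : ℕ → ℕ → ℕ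
  zeros : ∀ i j, (i, j) ∉ ν.cells \ lam.cells → entry i j = 0
  row_weak : ∀ i j, (i, j) ∈ ν.cells \ lam.cells → (i, j + 1) ∈ ν.cells \ lam.cells →
    entry i j ≤ entry i (j + 1)
  col_strict : ∀ i j, (i, j) ∈ ν.cells \ lam.cells → (i + 1, j) ∈ ν.cells \ lam.cells →
    entry i j < entry (i + 1) j
  content : ∀ k, ((ν.cells \ lam.cells).filter fun c => entry c.1 c.2 = k).card = μ.rowLen k
  lattice : ∀ i j k,
    ((ν.cells \ lam.cells).filter fun c =>
        (c.1 < i ∨ (c.1 = i ∧ j ≤ c.2)) ∧ entry c.1 c.2 = k + 1).card ≤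
    ((ν.cells \ lam.cells).filter fun c =>
        (c.1 < i ∨ (c.1 = i ∧ j ≤ c.2)) ∧ entry c.1 c.2 = k).card

/-- The Littlewood–Richardson coefficient `c^ν_{lam,μ}`, i.e. the coefficient of the
Schur function `s_ν` in the product `s_lam ⬝ s_μ`. -/
noncomputable def lrCoeff (ν lam μ : YoungDiagram) : ℕ :=
  Nat.card (LRFilling ν lam μ)

/-- The `a × b` rectangular Young diagram `R = (b^a)`. -/
def rect (a b : ℕ) : YoungDiagram :=
  ⟨Finset.range a ×ˢ Finset.range b, by
    rintro ⟨i, j⟩ ⟨i', j'⟩ ⟨hi, hj⟩ h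
    simp only [Finset.coe_product, Finset.coe_range, Set.mem_prod, Set.mem_Iio] at h ⊢
    exact ⟨lt_of_le_of_lt hi h.1, lt_of_le_of_lt hj h.2⟩⟩

/-- The complement `μᶜ` of `μ` in the `a × b` rectangle: the boxes of the rectangle
not in `μ`, rotated by 180°; its parts are `(μᶜ)ᵢ = b - μ_{a+1-i}` for `1 ≤ i ≤ a`. -/
def rectCompl (a b : ℕ) (μ : YoungDiagram) : YoungDiagram :=
  ⟨(rect a b).cells.filter fun c => (a - 1 - c.1, b - 1 - c.2) ∉ μ, by
    rintro ⟨i, j⟩ ⟨i', j'⟩ ⟨hi, hj⟩ h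
    simp only [Finset.coe_filter, Set.mem_setOf_eq] at h ⊢
    refine ⟨(rect a b).isLowerSet ⟨hi, hj⟩ h.1, fun hmem => h.2 ?_⟩
    exact μ.isLowerSet ⟨Nat.sub_le_sub_left hi _, Nat.sub_le_sub_left hj _⟩ hmem⟩

/-- Greedy `w`-decomposition piece sizes, starting from the state where `r` horizontal and
`c` vertical pieces have already been taken.  The letter `true` stands for `h` (a horizontal
piece: the rest of row `r`), `false` for `v` (a vertical piece: the rest of column `c`). -/
def wPieces : List Bool → ℕ → ℕ → YoungDiagram → List ℕ
  | [], _, _, _ => []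
  | true :: w, r, c, lam => (lam.rowLen r - c) :: wPieces w (r + 1) c lam
  | false :: w, r, c, lam => (lam.colLen c - r) :: wPieces w r (c + 1) lam

/-- The `w`-notation `lam^w` of a partition `lam`: the list of piece sizes of its greedy
`w`-decomposition. -/
def wNotation (w : List Bool) (lam : YoungDiagram) : List ℕ :=
  wPieces w 0 0 lam

/-- `lexLE l₁ l₂` : `l₁ ≤ l₂` in lexicographic order. -/
def lexLE (l₁ l₂ : List ℕ) : Prop :=
  l₁ = l₂ ∨ List.Lex (· < ·) l₁ l₂

/-- Remove the first row of a Young diagram. -/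
def stripRow (lam : YoungDiagram) : YoungDiagram :=
  ⟨(lam.cells.filter fun c => 0 < c.1).image fun c => (c.1 - 1, c.2), by
    rintro ⟨i', j'⟩ ⟨i, j⟩ ⟨hi, hj⟩ h
    simp only [Finset.coe_image, Finset.coe_filter, Set.mem_image, Set.mem_setOf_eq,
      Prod.exists] at h ⊢
    obtain ⟨x, y, ⟨hxy, hx⟩, heq⟩ := h
    obtain ⟨hx1, rfl⟩ : x - 1 = i' ∧ y = j' := by simpa [Prod.ext_iff] using heq
    exact ⟨i + 1, j, ⟨lam.isLowerSet (b := (i + 1, j)) ⟨by omega, by simpa using hj⟩ hxy,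
      by omega⟩, by simp⟩⟩

/-- Remove the first column of a Young diagram. -/
def stripCol (lam : YoungDiagram) : YoungDiagram :=
  (stripRow lam.transpose).transpose

/-- For `a`, `b` both odd, `lam` is almost self-complementary in the `a × b` rectangle if
`lam` is contained in the rectangle and the diagrams of `lam` and of its complement differ
only in which one contains the central box (row `(a+1)/2`, column `(b+1)/2`, 1-indexed). -/
def AlmostSelfCompl (a b : ℕ) (lam : YoungDiagram) : Prop :=
  lam ≤ rect a b ∧
    lam.cells \ (rectCompl a b lam).cells ∪ (rectCompl a b lam).cells \ lam.cells =
      {((a - 1) / 2, (b - 1) / 2)}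

section Aux

open YoungDiagram

lemma mem_stripRow {lam : YoungDiagram} {i j : ℕ} :
    (i, j) ∈ stripRow lam ↔ (i + 1, j) ∈ lam := by
  show (i, j) ∈ (stripRow lam).cells ↔ _
  simp only [stripRow, Finset.mem_image, Finset.mem_filter, Prod.exists]
  constructor
  · rintro ⟨x, y, ⟨hxy, hx⟩, heq⟩
    obtain ⟨h1, rfl⟩ : x - 1 = i ∧ y = j := by simpa [Prod.ext_iff] using heq
    have : x = i + 1 := by omega
    subst this; exact hxy
  · intro h
    exact ⟨i + 1, j, ⟨h, by omega⟩, by simp⟩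

lemma rowLen_eq_of {μ : YoungDiagram} {i m : ℕ} (h : ∀ j, (i, j) ∈ μ ↔ j < m) :
    μ.rowLen i = m := by
  rcases Nat.lt_trichotomy (μ.rowLen i) m with hl | he | hg
  · have := (h (μ.rowLen i)).mpr hl
    rw [mem_iff_lt_rowLen] at this; omega
  · exact he
  · have := (h m).mp (mem_iff_lt_rowLen.mpr hg)
    omega

lemma colLen_eq_of {μ : YoungDiagram} {j m : ℕ} (h : ∀ i, (i, j) ∈ μ ↔ i < m) :
    μ.colLen j = m := by
  rcases Nat.lt_trichotomy (μ.colLen j) m with hl | he | hg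
  · have := (h (μ.colLen j)).mpr hl
    rw [mem_iff_lt_colLen] at this; omega
  · exact he
  · have := (h m).mp (mem_iff_lt_colLen.mpr hg)
    omega

lemma rowLen_stripRow {lam : YoungDiagram} {i : ℕ} :
    (stripRow lam).rowLen i = lam.rowLen (i + 1) := by
  apply rowLen_eq_of
  intro j; rw [mem_stripRow, mem_iff_lt_rowLen]

lemma colLen_stripRow {lam : YoungDiagram} {j : ℕ} :
    (stripRow lam).colLen j = lam.colLen j - 1 := by
  apply colLen_eq_of
  intro i; rw [mem_stripRow, mem_iff_lt_colLen]; omega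

lemma mem_stripCol {lam : YoungDiagram} {i j : ℕ} :
    (i, j) ∈ stripCol lam ↔ (i, j + 1) ∈ lam := by
  show (i,j) ∈ (stripRow lam.transpose).transpose ↔ _
  rw [YoungDiagram.mem_transpose]
  show (j, i) ∈ stripRow lam.transpose ↔ _
  rw [mem_stripRow, YoungDiagram.mem_transpose]
  exact Iff.rfl

lemma rowLen_stripCol {lam : YoungDiagram} {i : ℕ} :
    (stripCol lam).rowLen i = lam.rowLen i - 1 := by
  apply rowLen_eq_of
  intro j; rw [mem_stripCol, mem_iff_lt_rowLen]; omega

lemma colLen_stripCol {lam : YoungDiagram} {j : ℕ} :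
    (stripCol lam).colLen j = lam.colLen (j + 1) := by
  apply colLen_eq_of
  intro i; rw [mem_stripCol, mem_iff_lt_colLen]

/-- Glue a row of length `a` on top of `lam`. -/
def glueRow (a : ℕ) (lam : YoungDiagram) (h : lam.rowLen 0 ≤ a) : YoungDiagram :=
  ⟨({0} ×ˢ Finset.range a) ∪ lam.cells.image fun c => (c.1 + 1, c.2), by
    rintro ⟨i, j⟩ ⟨i', j'⟩ ⟨hi, hj⟩ hm
    simp only [Finset.coe_union, Finset.coe_image, Finset.coe_product, Set.mem_union,
      Set.mem_image, Set.mem_prod, Finset.coe_singleton, Set.mem_singleton_iff,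
      Finset.coe_range, Set.mem_Iio, Prod.exists] at hm ⊢
    rcases hm with ⟨rfl, hja⟩ | ⟨x, y, hxy, heq⟩
    · left; exact ⟨by omega, by omega⟩
    · obtain ⟨rfl, rfl⟩ : x + 1 = i ∧ y = j := by simpa [Prod.ext_iff] using heq
      rcases Nat.eq_zero_or_pos i' with rfl | hpos
      · left
        refine ⟨rfl, ?_⟩
        have : (0, j') ∈ lam := lam.up_left_mem (Nat.zero_le x) hj hxy
        have := YoungDiagram.mem_iff_lt_rowLen.mp this
        omega
      · right
        exact ⟨i' - 1, j', lam.up_left_mem (by omega) hj hxy, by simp [Prod.ext_iff]; omega⟩⟩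

lemma mem_glueRow {a : ℕ} {lam : YoungDiagram} {h : lam.rowLen 0 ≤ a} {i j : ℕ} :
    (i, j) ∈ glueRow a lam h ↔ (i = 0 ∧ j < a) ∨ (1 ≤ i ∧ (i - 1, j) ∈ lam) := by
  show (i, j) ∈ (glueRow a lam h).cells ↔ _
  simp only [glueRow, Finset.mem_union, Finset.mem_product, Finset.mem_singleton,
    Finset.mem_range, Finset.mem_image, Prod.exists]
  constructor
  · rintro (⟨rfl, hja⟩ | ⟨x, y, hxy, heq⟩)
    · exact Or.inl ⟨rfl, hja⟩
    · obtain ⟨rfl, rfl⟩ : x + 1 = i ∧ y = j := by simpa [Prod.ext_iff] using heq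
      exact Or.inr ⟨by omega, by simpa using hxy⟩
  · rintro (⟨rfl, hja⟩ | ⟨hi, hm⟩)
    · exact Or.inl ⟨rfl, hja⟩
    · exact Or.inr ⟨i - 1, j, hm, by simp [Prod.ext_iff]; omega⟩

lemma rowLen_glueRow_zero {a : ℕ} {lam : YoungDiagram} {h : lam.rowLen 0 ≤ a} :
    (glueRow a lam h).rowLen 0 = a := by
  apply rowLen_eq_of; intro j; rw [mem_glueRow]; omega

lemma rowLen_glueRow_succ {a : ℕ} {lam : YoungDiagram} {h : lam.rowLen 0 ≤ a} {i : ℕ} :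
    (glueRow a lam h).rowLen (i + 1) = lam.rowLen i := by
  apply rowLen_eq_of; intro j
  rw [mem_glueRow, ← YoungDiagram.mem_iff_lt_rowLen]
  simp

lemma stripRow_glueRow {a : ℕ} {lam : YoungDiagram} {h : lam.rowLen 0 ≤ a} :
    stripRow (glueRow a lam h) = lam := by
  ext ⟨i, j⟩
  rw [YoungDiagram.mem_cells, YoungDiagram.mem_cells, mem_stripRow, mem_glueRow]
  simp

lemma glueRow_stripRow {lam : YoungDiagram} :
    glueRow (lam.rowLen 0) (stripRow lam)
      (by rw [rowLen_stripRow]; exact lam.rowLen_anti 0 1 (by omega)) = lam := by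
  ext ⟨i, j⟩
  rw [YoungDiagram.mem_cells, YoungDiagram.mem_cells, mem_glueRow]
  constructor
  · rintro (⟨rfl, hj⟩ | ⟨hi, hm⟩)
    · exact YoungDiagram.mem_iff_lt_rowLen.mpr hj
    · rw [mem_stripRow] at hm
      have : i - 1 + 1 = i := by omega
      rwa [this] at hm
  · intro hm
    rcases Nat.eq_zero_or_pos i with rfl | hpos
    · exact Or.inl ⟨rfl, YoungDiagram.mem_iff_lt_rowLen.mp hm⟩
    · refine Or.inr ⟨hpos, ?_⟩
      rw [mem_stripRow]
      have : i - 1 + 1 = i := by omega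
      rwa [this]

end Aux
section Aux2

open YoungDiagram

/-- Glue a column of height `a` on the left of `lam`. -/
def glueCol (a : ℕ) (lam : YoungDiagram) (h : lam.colLen 0 ≤ a) : YoungDiagram :=
  (glueRow a lam.transpose (by rwa [YoungDiagram.rowLen_transpose])).transpose

lemma mem_glueCol {a : ℕ} {lam : YoungDiagram} {h : lam.colLen 0 ≤ a} {i j : ℕ} :
    (i, j) ∈ glueCol a lam h ↔ (j = 0 ∧ i < a) ∨ (1 ≤ j ∧ (i, j - 1) ∈ lam) := by
  rw [glueCol, YoungDiagram.mem_transpose]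
  show (j, i) ∈ glueRow _ _ _ ↔ _
  rw [mem_glueRow, YoungDiagram.mem_transpose]
  exact Iff.rfl

lemma colLen_glueCol_zero {a : ℕ} {lam : YoungDiagram} {h : lam.colLen 0 ≤ a} :
    (glueCol a lam h).colLen 0 = a := by
  apply colLen_eq_of; intro i; rw [mem_glueCol]; omega

lemma rowLen_glueCol {a : ℕ} {lam : YoungDiagram} {h : lam.colLen 0 ≤ a} {i : ℕ} :
    (glueCol a lam h).rowLen i = lam.rowLen i + (if i < a then 1 else 0) := by
  apply rowLen_eq_of; intro j
  rw [mem_glueCol]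
  rcases Nat.lt_or_ge i a with hia | hia
  · simp only [if_pos hia]
    constructor
    · rintro (⟨rfl, _⟩ | ⟨hj, hm⟩)
      · omega
      · have := YoungDiagram.mem_iff_lt_rowLen.mp hm; omega
    · intro hj
      rcases Nat.eq_zero_or_pos j with rfl | hpos
      · exact Or.inl ⟨rfl, hia⟩
      · exact Or.inr ⟨hpos, YoungDiagram.mem_iff_lt_rowLen.mpr (by omega)⟩
  · simp only [if_neg (by omega : ¬ i < a)]
    have hrz : lam.rowLen i = 0 := by
      by_contra hr
      have h0 : (i, 0) ∈ lam := YoungDiagram.mem_iff_lt_rowLen.mpr (by omega)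
      have := YoungDiagram.mem_iff_lt_colLen.mp h0
      omega
    rw [hrz]
    constructor
    · rintro (⟨rfl, h2⟩ | ⟨hj, hm⟩)
      · omega
      · have h0 : (i, 0) ∈ lam := lam.up_left_mem le_rfl (Nat.zero_le _) hm
        have := YoungDiagram.mem_iff_lt_colLen.mp h0
        omega
    · intro hj; omega

lemma stripCol_glueCol {a : ℕ} {lam : YoungDiagram} {h : lam.colLen 0 ≤ a} :
    stripCol (glueCol a lam h) = lam := by
  ext ⟨i, j⟩
  rw [YoungDiagram.mem_cells, YoungDiagram.mem_cells, mem_stripCol, mem_glueCol]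
  simp

lemma glueCol_stripCol {lam : YoungDiagram} :
    glueCol (lam.colLen 0) (stripCol lam)
      (by rw [colLen_stripCol]; exact lam.colLen_anti 0 1 (by omega)) = lam := by
  ext ⟨i, j⟩
  rw [YoungDiagram.mem_cells, YoungDiagram.mem_cells, mem_glueCol]
  constructor
  · rintro (⟨rfl, hj⟩ | ⟨hj, hm⟩)
    · exact YoungDiagram.mem_iff_lt_colLen.mpr hj
    · rw [mem_stripCol] at hm
      have : j - 1 + 1 = j := by omega
      rwa [this] at hm
  · intro hm
    rcases Nat.eq_zero_or_pos j with rfl | hpos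
    · exact Or.inl ⟨rfl, YoungDiagram.mem_iff_lt_colLen.mp hm⟩
    · refine Or.inr ⟨hpos, ?_⟩
      rw [mem_stripCol]
      have : j - 1 + 1 = j := by omega
      rwa [this]

lemma wPieces_stripRow : ∀ (w : List Bool) (r c : ℕ) (lam : YoungDiagram),
    wPieces w (r + 1) c lam = wPieces w r c (stripRow lam)
  | [], _, _, _ => rfl
  | true :: w, r, c, lam => by
      rw [wPieces, wPieces, rowLen_stripRow, wPieces_stripRow w]
  | false :: w, r, c, lam => by
      rw [wPieces, wPieces, colLen_stripRow, wPieces_stripRow w]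
      congr 1
      omega

lemma wPieces_stripCol : ∀ (w : List Bool) (r c : ℕ) (lam : YoungDiagram),
    wPieces w r (c + 1) lam = wPieces w r c (stripCol lam)
  | [], _, _, _ => rfl
  | true :: w, r, c, lam => by
      rw [wPieces, wPieces, rowLen_stripCol, wPieces_stripCol w]
      congr 1
      omega
  | false :: w, r, c, lam => by
      rw [wPieces, wPieces, colLen_stripCol, wPieces_stripCol w]

lemma wNotation_cons_true {w : List Bool} {lam : YoungDiagram} :
    wNotation (true :: w) lam = lam.rowLen 0 :: wNotation w (stripRow lam) := by
  rw [wNotation, wPieces, wPieces_stripRow, wNotation]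
  simp

lemma wNotation_cons_false {w : List Bool} {lam : YoungDiagram} :
    wNotation (false :: w) lam = lam.colLen 0 :: wNotation w (stripCol lam) := by
  rw [wNotation, wPieces, wPieces_stripCol, wNotation]
  simp

end Aux2
section Aux3

open YoungDiagram

namespace LRFilling

variable {π μ ν : YoungDiagram} (F : LRFilling π μ ν)

lemma mem_skew_iff {i j : ℕ} :
    (i, j) ∈ π.cells \ μ.cells ↔ (i, j) ∈ π ∧ (i, j) ∉ μ := by
  rw [Finset.mem_sdiff, YoungDiagram.mem_cells, YoungDiagram.mem_cells]

lemma entry_lt {i j : ℕ} (h : (i, j) ∈ π.cells \ μ.cells) :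
    F.entry i j < ν.colLen 0 := by
  have hc := F.content (F.entry i j)
  have hmem : (i, j) ∈ (π.cells \ μ.cells).filter fun c => F.entry c.1 c.2 = F.entry i j :=
    Finset.mem_filter.mpr ⟨h, rfl⟩
  have hpos : 0 < ν.rowLen (F.entry i j) := by
    rw [← hc]
    exact Finset.card_pos.mpr ⟨_, hmem⟩
  have : (F.entry i j, 0) ∈ ν := YoungDiagram.mem_iff_lt_rowLen.mpr hpos
  exact YoungDiagram.mem_iff_lt_colLen.mp this

lemma entry_row_mono {i j j' : ℕ} (hjj : j ≤ j') (hj : (i, j) ∈ π.cells \ μ.cells)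
    (hj' : (i, j') ∈ π.cells \ μ.cells) : F.entry i j ≤ F.entry i j' := by
  induction j' , hjj using Nat.le_induction with
  | base => exact le_rfl
  | succ n hn ih =>
    have hmid : (i, n) ∈ π.cells \ μ.cells := by
      rw [mem_skew_iff] at hj hj' ⊢
      refine ⟨π.up_left_mem le_rfl (by omega) hj'.1, fun hmem => hj.2 ?_⟩
      exact μ.up_left_mem le_rfl hn hmem
    exact le_trans (ih hmid) (F.row_weak i n hmid hj')

lemma entry_col0_ge : ∀ i : ℕ, (i, 0) ∈ π.cells \ μ.cells → i - μ.colLen 0 ≤ F.entry i 0 := by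
  intro i
  induction i with
  | zero => intro _; omega
  | succ n ih =>
    intro h
    rcases Nat.lt_or_ge (n + 1) (μ.colLen 0 + 1) with hlt | hge
    · omega
    · have hn : (n, 0) ∈ π.cells \ μ.cells := by
        rw [mem_skew_iff] at h ⊢
        refine ⟨π.up_left_mem (by omega) le_rfl h.1, ?_⟩
        rw [YoungDiagram.mem_iff_lt_colLen]
        omega
      have := F.col_strict n 0 hn h
      have := ih hn
      omega

lemma row0_entry_zero {j : ℕ} (h : (0, j) ∈ π.cells \ μ.cells) : F.entry 0 j = 0 := by
  by_contra hne
  set k := F.entry 0 j with hk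
  have hk1 : 1 ≤ k := Nat.one_le_iff_ne_zero.mpr hne
  have hl := F.lattice 0 j (k - 1)
  rw [(by omega : k - 1 + 1 = k)] at hl
  have h1 : 0 < ((π.cells \ μ.cells).filter fun c =>
      (c.1 < 0 ∨ (c.1 = 0 ∧ j ≤ c.2)) ∧ F.entry c.1 c.2 = k).card := by
    apply Finset.card_pos.mpr
    exact ⟨(0, j), Finset.mem_filter.mpr ⟨h, Or.inr ⟨rfl, le_rfl⟩, rfl⟩⟩
  have h2 : ((π.cells \ μ.cells).filter fun c =>
      (c.1 < 0 ∨ (c.1 = 0 ∧ j ≤ c.2)) ∧ F.entry c.1 c.2 = k - 1).card = 0 := by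
    rw [Finset.card_eq_zero, Finset.filter_eq_empty_iff]
    rintro ⟨ci, cj⟩ hc
    rintro ⟨(hlt | ⟨rfl, hj⟩), he⟩
    · omega
    · have he' : F.entry 0 cj = k - 1 := he
      have hmono : F.entry 0 j ≤ F.entry 0 cj := F.entry_row_mono hj h hc
      omega
  omega

lemma rowLen0_le (F : LRFilling π μ ν) : π.rowLen 0 ≤ μ.rowLen 0 + ν.rowLen 0 := by
  have hsub : ({0} ×ˢ Finset.Ico (μ.rowLen 0) (π.rowLen 0)) ⊆
      (π.cells \ μ.cells).filter fun c => F.entry c.1 c.2 = 0 := by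
    rintro ⟨i, j⟩ hm
    simp only [Finset.mem_product, Finset.mem_singleton, Finset.mem_Ico] at hm
    obtain ⟨rfl, hj1, hj2⟩ := hm
    have hsk : (0, j) ∈ π.cells \ μ.cells := by
      rw [mem_skew_iff, YoungDiagram.mem_iff_lt_rowLen, YoungDiagram.mem_iff_lt_rowLen]
      omega
    exact Finset.mem_filter.mpr ⟨hsk, F.row0_entry_zero hsk⟩
  have hcard := Finset.card_le_card hsub
  rw [F.content 0, Finset.card_product, Finset.card_singleton, Nat.card_Ico] at hcard
  omega

lemma colLen0_le (F : LRFilling π μ ν) : π.colLen 0 ≤ μ.colLen 0 + ν.colLen 0 := by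
  rcases Nat.lt_or_ge (π.colLen 0) (μ.colLen 0 + 1) with hlt | hge
  · omega
  · set i := π.colLen 0 - 1 with hi
    have hsk : (i, 0) ∈ π.cells \ μ.cells := by
      rw [mem_skew_iff, YoungDiagram.mem_iff_lt_colLen, YoungDiagram.mem_iff_lt_colLen]
      omega
    have h1 := F.entry_col0_ge i hsk
    have h2 := F.entry_lt hsk
    omega

end LRFilling

end Aux3
section Aux4

open YoungDiagram

namespace LRFilling

variable {π μ ν : YoungDiagram}

lemma entry_eq_imp (F G : LRFilling π μ ν) (h : F.entry = G.entry) : F = G := by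
  cases F; cases G
  simp only at h
  subst h
  rfl

lemma finite : Finite (LRFilling π μ ν) := by
  have : Function.Injective (fun (F : LRFilling π μ ν) =>
      (fun c : (π.cells : Finset (ℕ × ℕ)) =>
        (⟨F.entry c.1.1 c.1.2, by
          rcases Classical.em ((c.1.1, c.1.2) ∈ π.cells \ μ.cells) with hm | hm
          · exact Nat.lt_succ_of_lt (F.entry_lt hm)
          · rw [F.zeros _ _ hm]
            exact Nat.succ_pos _⟩ : Fin (ν.colLen 0 + 1)))) := by
    intro F G hFG
    apply entry_eq_imp
    funext i j
    by_cases hij : (i, j) ∈ π.cells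
    · have := congrFun hFG ⟨(i, j), hij⟩
      simpa using congrArg Fin.val this
    · have hns : (i, j) ∉ π.cells \ μ.cells := fun hc => hij (Finset.mem_sdiff.mp hc).1
      rw [F.zeros _ _ hns, G.zeros _ _ hns]
  exact Finite.of_injective _ this

lemma lrCoeff_ne_zero (h : Nonempty (LRFilling π μ ν)) : lrCoeff π μ ν ≠ 0 := by
  rw [lrCoeff]
  exact Nat.card_ne_zero.mpr ⟨h, finite⟩

end LRFilling

/-- The empty LR filling. -/
def LRFilling.botFilling : LRFilling ⊥ ⊥ ⊥ where
  le := le_rfl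
  entry := fun _ _ => 0
  zeros := fun _ _ _ => rfl
  row_weak := fun _ _ _ _ => le_rfl
  col_strict := fun i j h _ => by
    rw [YoungDiagram.cells_bot] at h
    simp at h
  content := fun k => by
    have h0 : (⊥ : YoungDiagram).rowLen k = 0 :=
      rowLen_eq_of (fun j => by simp [YoungDiagram.notMem_bot])
    simp [YoungDiagram.cells_bot, h0]
  lattice := fun _ _ _ => le_rfl

end Aux4
section Aux5

open YoungDiagram

variable {π₀ μ₀ ν₀ : YoungDiagram}

/-- The entry function of the filling obtained by adding a full row of `0`s on top. -/
def rowGlueEntry (F : LRFilling π₀ μ₀ ν₀) : ℕ → ℕ → ℕ := fun i j =>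
  if i = 0 then 0
  else if (i - 1, j) ∈ π₀.cells \ μ₀.cells then F.entry (i - 1) j + 1 else 0

lemma rowGlueEntry_zero (F : LRFilling π₀ μ₀ ν₀) (j : ℕ) : rowGlueEntry F 0 j = 0 := by
  rw [rowGlueEntry]
  simp

lemma rowGlueEntry_pos (F : LRFilling π₀ μ₀ ν₀) {i : ℕ} (j : ℕ) (hi : 1 ≤ i)
    (hm : (i - 1, j) ∈ π₀.cells \ μ₀.cells) :
    rowGlueEntry F i j = F.entry (i - 1) j + 1 := by
  rw [rowGlueEntry]
  rw [if_neg (by omega), if_pos hm]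

lemma rowGlueEntry_notmem (F : LRFilling π₀ μ₀ ν₀) {i : ℕ} (j : ℕ)
    (hm : (i - 1, j) ∉ π₀.cells \ μ₀.cells) :
    rowGlueEntry F i j = 0 := by
  rw [rowGlueEntry]
  rcases Nat.eq_zero_or_pos i with rfl | hpos
  · simp
  · rw [if_neg (by omega), if_neg hm]

lemma mem_skew_glueRow {a b : ℕ} (hπ : π₀.rowLen 0 ≤ a + b) (ha : μ₀.rowLen 0 ≤ a)
    {i j : ℕ} :
    (i, j) ∈ (glueRow (a + b) π₀ hπ).cells \ (glueRow a μ₀ ha).cells ↔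
      (i = 0 ∧ a ≤ j ∧ j < a + b) ∨ (1 ≤ i ∧ (i - 1, j) ∈ π₀.cells \ μ₀.cells) := by
  rw [Finset.mem_sdiff, YoungDiagram.mem_cells, YoungDiagram.mem_cells, mem_glueRow,
    mem_glueRow]
  rcases Nat.eq_zero_or_pos i with rfl | hpos
  · constructor
    · rintro ⟨h1 | h1, h2⟩
      · refine Or.inl ⟨rfl, ?_, h1.2⟩
        by_contra hja
        exact h2 (Or.inl ⟨rfl, by omega⟩)
      · omega
    · rintro (⟨_, hj1, hj2⟩ | h)
      · exact ⟨Or.inl ⟨rfl, hj2⟩, by rintro (⟨_, h⟩ | ⟨h, _⟩) <;> omega⟩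
      · omega
  · constructor
    · rintro ⟨h1 | h1, h2⟩
      · omega
      · refine Or.inr ⟨hpos, Finset.mem_sdiff.mpr
          ⟨(YoungDiagram.mem_cells _).mpr h1.2, fun hm =>
            h2 (Or.inr ⟨hpos, (YoungDiagram.mem_cells _).mp hm⟩)⟩⟩
    · rintro (h | ⟨_, hm⟩)
      · omega
      · rw [Finset.mem_sdiff, YoungDiagram.mem_cells, YoungDiagram.mem_cells] at hm
        exact ⟨Or.inr ⟨hpos, hm.1⟩, by
          rintro (⟨h, _⟩ | ⟨_, h⟩)
          · omega
          · exact hm.2 h⟩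

lemma rowGlue_shift_card (F : LRFilling π₀ μ₀ ν₀) {a b : ℕ}
    (hπ : π₀.rowLen 0 ≤ a + b) (ha : μ₀.rowLen 0 ≤ a)
    (p : ℕ × ℕ → Prop) [DecidablePred p] :
    (((glueRow (a + b) π₀ hπ).cells \ (glueRow a μ₀ ha).cells).filter
        fun c => 1 ≤ c.1 ∧ p (c.1 - 1, c.2)).card =
      ((π₀.cells \ μ₀.cells).filter p).card := by
  apply Finset.card_nbij' (fun c => (c.1 - 1, c.2)) (fun c => (c.1 + 1, c.2))
  · rintro ⟨i, j⟩ hm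
    rw [Finset.mem_coe, Finset.mem_filter] at hm
    obtain ⟨hS, hi, hp⟩ := hm
    rw [mem_skew_glueRow] at hS
    rcases hS with ⟨h0, _⟩ | ⟨_, hm⟩
    · omega
    · exact Finset.mem_filter.mpr ⟨hm, hp⟩
  · rintro ⟨i, j⟩ hm
    rw [Finset.mem_coe, Finset.mem_filter] at hm
    refine Finset.mem_filter.mpr ⟨?_, by dsimp only; omega, by simpa using hm.2⟩
    rw [mem_skew_glueRow]
    exact Or.inr ⟨by omega, by simpa using hm.1⟩
  · rintro ⟨i, j⟩ hm
    rw [Finset.mem_coe, Finset.mem_filter] at hm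
    obtain ⟨_, hi, _⟩ := hm
    show (i - 1 + 1, j) = (i, j)
    rw [Prod.mk.injEq]
    constructor
    · omega
    · rfl
  · rintro ⟨i, j⟩ _
    show (i + 1 - 1, j) = (i, j)
    rw [Prod.mk.injEq]
    constructor
    · omega
    · rfl

/-- Adding a row of length `a` to `μ₀`, `b` to `ν₀` and `a + b` to `π₀` preserves
the existence of LR fillings. -/
def LRFilling.glueRowFilling (F : LRFilling π₀ μ₀ ν₀) {a b : ℕ}
    (ha : μ₀.rowLen 0 ≤ a) (hb : ν₀.rowLen 0 ≤ b) (hπ : π₀.rowLen 0 ≤ a + b) :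
    LRFilling (glueRow (a + b) π₀ hπ) (glueRow a μ₀ ha) (glueRow b ν₀ hb) where
  le := by
    rw [← YoungDiagram.cells_subset_iff]
    intro c hc
    rw [YoungDiagram.mem_cells] at hc ⊢
    obtain ⟨i, j⟩ := c
    rw [mem_glueRow] at hc ⊢
    rcases hc with ⟨rfl, hj⟩ | ⟨hi, hm⟩
    · exact Or.inl ⟨rfl, by omega⟩
    · exact Or.inr ⟨hi, YoungDiagram.cells_subset_iff.mpr F.le (by simpa using hm)⟩
  entry := rowGlueEntry F
  zeros := by
    intro i j hn
    rcases Nat.eq_zero_or_pos i with rfl | hpos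
    · exact rowGlueEntry_zero F j
    · apply rowGlueEntry_notmem
      intro hm
      exact hn ((mem_skew_glueRow hπ ha).mpr (Or.inr ⟨hpos, hm⟩))
  row_weak := by
    intro i j h1 h2
    rw [mem_skew_glueRow] at h1 h2
    rcases Nat.eq_zero_or_pos i with rfl | hpos
    · rw [rowGlueEntry_zero, rowGlueEntry_zero]
    · have hm1 : (i - 1, j) ∈ π₀.cells \ μ₀.cells := by
        rcases h1 with h | h; · omega
        exact h.2
      have hm2 : (i - 1, j + 1) ∈ π₀.cells \ μ₀.cells := by
        rcases h2 with h | h; · omega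
        exact h.2
      rw [rowGlueEntry_pos F j hpos hm1, rowGlueEntry_pos F (j + 1) hpos hm2]
      exact Nat.succ_le_succ (F.row_weak (i - 1) j hm1 hm2)
  col_strict := by
    intro i j h1 h2
    rw [mem_skew_glueRow] at h1 h2
    have hm2 : (i + 1 - 1, j) ∈ π₀.cells \ μ₀.cells := by
      rcases h2 with h | h; · omega
      exact h.2
    rw [rowGlueEntry_pos F j (by omega) hm2]
    rcases Nat.eq_zero_or_pos i with rfl | hpos
    · rw [rowGlueEntry_zero]
      omega
    · have hm1 : (i - 1, j) ∈ π₀.cells \ μ₀.cells := by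
        rcases h1 with h | h; · omega
        exact h.2
      rw [rowGlueEntry_pos F j hpos hm1]
      have hstep := F.col_strict (i - 1) j hm1 (by
        have heq : (i - 1 + 1, j) = (i + 1 - 1, j) := by
          rw [Prod.mk.injEq]; omega
        rw [heq]; exact hm2)
      have heq2 : i + 1 - 1 = i - 1 + 1 := by omega
      rw [heq2]
      omega
  content := by
    intro k
    rcases Nat.eq_zero_or_pos k with rfl | hk
    · have hset : ((glueRow (a + b) π₀ hπ).cells \ (glueRow a μ₀ ha).cells).filter
          (fun c => rowGlueEntry F c.1 c.2 = 0) = {0} ×ˢ Finset.Ico a (a + b) := by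
        ext ⟨i, j⟩
        rw [Finset.mem_filter, mem_skew_glueRow]
        simp only [Finset.mem_product, Finset.mem_singleton, Finset.mem_Ico]
        constructor
        · rintro ⟨⟨h0, hj1, hj2⟩ | ⟨hi, hm⟩, he⟩
          · exact ⟨h0, hj1, hj2⟩
          · rw [rowGlueEntry_pos F j hi hm] at he
            omega
        · rintro ⟨rfl, hj1, hj2⟩
          exact ⟨Or.inl ⟨rfl, hj1, hj2⟩, rowGlueEntry_zero F j⟩
      rw [hset, rowLen_glueRow_zero, Finset.card_product, Finset.card_singleton,
        Nat.card_Ico]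
      omega
    · obtain ⟨k, rfl⟩ : ∃ k', k = k' + 1 := ⟨k - 1, by omega⟩
      have hfc : ((glueRow (a + b) π₀ hπ).cells \ (glueRow a μ₀ ha).cells).filter
            (fun c => rowGlueEntry F c.1 c.2 = k + 1) =
          ((glueRow (a + b) π₀ hπ).cells \ (glueRow a μ₀ ha).cells).filter
            (fun c => 1 ≤ c.1 ∧ (fun d : ℕ × ℕ => F.entry d.1 d.2 = k) (c.1 - 1, c.2)) := by
        apply Finset.filter_congr
        rintro ⟨i, j⟩ hm
        rw [mem_skew_glueRow] at hm
        simp only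
        rcases hm with ⟨rfl, _, _⟩ | ⟨hi, hm₀⟩
        · rw [rowGlueEntry_zero]
          constructor
          · omega
          · rintro ⟨h, _⟩; omega
        · rw [rowGlueEntry_pos F j hi hm₀]
          constructor
          · intro h; exact ⟨hi, by omega⟩
          · rintro ⟨_, h⟩; omega
      rw [rowLen_glueRow_succ, ← F.content k, hfc]
      exact rowGlue_shift_card F hπ ha (fun d : ℕ × ℕ => F.entry d.1 d.2 = k)
  lattice := by
    intro i j k
    rcases Nat.eq_zero_or_pos i with rfl | hpos
    · have h0 : ((glueRow (a + b) π₀ hπ).cells \ (glueRow a μ₀ ha).cells).filter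
          (fun c => (c.1 < 0 ∨ (c.1 = 0 ∧ j ≤ c.2)) ∧ rowGlueEntry F c.1 c.2 = k + 1) = ∅ := by
        rw [Finset.filter_eq_empty_iff]
        rintro ⟨ci, cj⟩ _ ⟨hcond, he⟩
        have hci : ci = 0 := by omega
        subst hci
        rw [show ((0, cj) : ℕ × ℕ).2 = cj from rfl, rowGlueEntry_zero] at he
        omega
      rw [h0]
      simp
    · have key : ∀ m, (((glueRow (a + b) π₀ hπ).cells \ (glueRow a μ₀ ha).cells).filter
            fun c => (c.1 < i ∨ (c.1 = i ∧ j ≤ c.2)) ∧ rowGlueEntry F c.1 c.2 = m + 1).card =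
          ((π₀.cells \ μ₀.cells).filter
            fun c => (c.1 < i - 1 ∨ (c.1 = i - 1 ∧ j ≤ c.2)) ∧ F.entry c.1 c.2 = m).card := by
        intro m
        have hcong : (((glueRow (a + b) π₀ hπ).cells \ (glueRow a μ₀ ha).cells).filter
              fun c => (c.1 < i ∨ (c.1 = i ∧ j ≤ c.2)) ∧ rowGlueEntry F c.1 c.2 = m + 1) =
            (((glueRow (a + b) π₀ hπ).cells \ (glueRow a μ₀ ha).cells).filter
              fun c => 1 ≤ c.1 ∧ (fun d : ℕ × ℕ =>
                (d.1 < i - 1 ∨ (d.1 = i - 1 ∧ j ≤ d.2)) ∧ F.entry d.1 d.2 = m)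
                  (c.1 - 1, c.2)) := by
          apply Finset.filter_congr
          rintro ⟨ci, cj⟩ hm
          rw [mem_skew_glueRow] at hm
          simp only
          rcases hm with ⟨rfl, _, _⟩ | ⟨hci, hm₀⟩
          · rw [rowGlueEntry_zero]
            constructor
            · rintro ⟨_, h⟩; omega
            · rintro ⟨h, _⟩; omega
          · rw [rowGlueEntry_pos F cj hci hm₀]
            constructor
            · rintro ⟨hc, he⟩
              exact ⟨hci, by omega, by omega⟩
            · rintro ⟨_, hc, he⟩
              exact ⟨by omega, by omega⟩
        rw [hcong]
        exact rowGlue_shift_card F hπ ha (fun d : ℕ × ℕ =>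
          (d.1 < i - 1 ∨ (d.1 = i - 1 ∧ j ≤ d.2)) ∧ F.entry d.1 d.2 = m)
      rcases Nat.eq_zero_or_pos k with rfl | hk
      · rw [key 0]
        have h1 : ((π₀.cells \ μ₀.cells).filter
              fun c => (c.1 < i - 1 ∨ (c.1 = i - 1 ∧ j ≤ c.2)) ∧ F.entry c.1 c.2 = 0).card ≤
            ν₀.rowLen 0 := by
          rw [← F.content 0]
          apply Finset.card_le_card
          intro c hc
          rw [Finset.mem_filter] at hc ⊢
          exact ⟨hc.1, hc.2.2⟩
        have h2 : b ≤ (((glueRow (a + b) π₀ hπ).cells \ (glueRow a μ₀ ha).cells).filter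
            fun c => (c.1 < i ∨ (c.1 = i ∧ j ≤ c.2)) ∧ rowGlueEntry F c.1 c.2 = 0).card := by
          have hsub : ({0} ×ˢ Finset.Ico a (a + b)) ⊆
              (((glueRow (a + b) π₀ hπ).cells \ (glueRow a μ₀ ha).cells).filter
                fun c => (c.1 < i ∨ (c.1 = i ∧ j ≤ c.2)) ∧ rowGlueEntry F c.1 c.2 = 0) := by
            rintro ⟨ci, cj⟩ hm
            simp only [Finset.mem_product, Finset.mem_singleton, Finset.mem_Ico] at hm
            obtain ⟨rfl, hj1, hj2⟩ := hm
            exact Finset.mem_filter.mpr ⟨(mem_skew_glueRow hπ ha).mpr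
              (Or.inl ⟨rfl, hj1, hj2⟩), Or.inl hpos, rowGlueEntry_zero F cj⟩
          have := Finset.card_le_card hsub
          rw [Finset.card_product, Finset.card_singleton, Nat.card_Ico] at this
          omega
        omega
      · obtain ⟨k, rfl⟩ : ∃ k', k = k' + 1 := ⟨k - 1, by omega⟩
        rw [key (k + 1), key k]
        exact F.lattice (i - 1) j k

end Aux5
section Aux6

open YoungDiagram

variable {π₀ μ₀ ν₀ : YoungDiagram}

/-- Generic split of a filter over cells by whether the cell is in column `0`. -/
lemma card_filter_split (s : Finset (ℕ × ℕ)) (t : ℕ × ℕ → Prop) [DecidablePred t] :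
    (s.filter t).card =
      (s.filter fun c => c.2 = 0 ∧ t c).card + (s.filter fun c => 1 ≤ c.2 ∧ t c).card := by
  rw [← Finset.card_union_of_disjoint]
  · congr 1
    ext ⟨i, j⟩
    simp only [Finset.mem_filter, Finset.mem_union]
    constructor
    · rintro ⟨hm, ht⟩
      rcases Nat.eq_zero_or_pos j with rfl | hpos
      · exact Or.inl ⟨hm, rfl, ht⟩
      · exact Or.inr ⟨hm, hpos, ht⟩
    · rintro (⟨hm, _, ht⟩ | ⟨hm, _, ht⟩) <;> exact ⟨hm, ht⟩
  · rw [Finset.disjoint_left]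
    rintro ⟨i, j⟩ hm hm'
    rw [Finset.mem_filter] at hm hm'
    omega

/-- The entry function of the filling obtained by adding a full column on the left. -/
def colGlueEntry (F : LRFilling π₀ μ₀ ν₀) (a b : ℕ) : ℕ → ℕ → ℕ := fun i j =>
  if j = 0 then (if a ≤ i ∧ i < a + b then i - a else 0)
  else if (i, j - 1) ∈ π₀.cells \ μ₀.cells then F.entry i (j - 1) else 0

lemma colGlueEntry_col0_mem (F : LRFilling π₀ μ₀ ν₀) {a b i : ℕ} (h : a ≤ i ∧ i < a + b) :
    colGlueEntry F a b i 0 = i - a := by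
  rw [colGlueEntry, if_pos rfl, if_pos h]

lemma colGlueEntry_col0_notmem (F : LRFilling π₀ μ₀ ν₀) {a b i : ℕ}
    (h : ¬(a ≤ i ∧ i < a + b)) : colGlueEntry F a b i 0 = 0 := by
  rw [colGlueEntry, if_pos rfl, if_neg h]

lemma colGlueEntry_pos (F : LRFilling π₀ μ₀ ν₀) {a b i j : ℕ} (hj : 1 ≤ j)
    (hm : (i, j - 1) ∈ π₀.cells \ μ₀.cells) :
    colGlueEntry F a b i j = F.entry i (j - 1) := by
  rw [colGlueEntry, if_neg (by omega), if_pos hm]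

lemma colGlueEntry_pos_notmem (F : LRFilling π₀ μ₀ ν₀) {a b i j : ℕ} (hj : 1 ≤ j)
    (hm : (i, j - 1) ∉ π₀.cells \ μ₀.cells) :
    colGlueEntry F a b i j = 0 := by
  rw [colGlueEntry, if_neg (by omega), if_neg hm]

lemma mem_skew_glueCol {a b : ℕ} (hπ : π₀.colLen 0 ≤ a + b) (ha : μ₀.colLen 0 ≤ a)
    {i j : ℕ} :
    (i, j) ∈ (glueCol (a + b) π₀ hπ).cells \ (glueCol a μ₀ ha).cells ↔
      (j = 0 ∧ a ≤ i ∧ i < a + b) ∨ (1 ≤ j ∧ (i, j - 1) ∈ π₀.cells \ μ₀.cells) := by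
  rw [Finset.mem_sdiff, YoungDiagram.mem_cells, YoungDiagram.mem_cells, mem_glueCol,
    mem_glueCol]
  rcases Nat.eq_zero_or_pos j with rfl | hpos
  · constructor
    · rintro ⟨h1 | h1, h2⟩
      · refine Or.inl ⟨rfl, ?_, h1.2⟩
        by_contra hja
        exact h2 (Or.inl ⟨rfl, by omega⟩)
      · omega
    · rintro (⟨_, hj1, hj2⟩ | h)
      · exact ⟨Or.inl ⟨rfl, hj2⟩, by rintro (⟨_, h⟩ | ⟨h, _⟩) <;> omega⟩
      · omega
  · constructor
    · rintro ⟨h1 | h1, h2⟩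
      · omega
      · refine Or.inr ⟨hpos, Finset.mem_sdiff.mpr
          ⟨(YoungDiagram.mem_cells _).mpr h1.2, fun hm =>
            h2 (Or.inr ⟨hpos, (YoungDiagram.mem_cells _).mp hm⟩)⟩⟩
    · rintro (h | ⟨_, hm⟩)
      · omega
      · rw [Finset.mem_sdiff, YoungDiagram.mem_cells, YoungDiagram.mem_cells] at hm
        exact ⟨Or.inr ⟨hpos, hm.1⟩, by
          rintro (⟨h, _⟩ | ⟨_, h⟩)
          · omega
          · exact hm.2 h⟩

lemma colGlue_shift_card (F : LRFilling π₀ μ₀ ν₀) {a b : ℕ}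
    (hπ : π₀.colLen 0 ≤ a + b) (ha : μ₀.colLen 0 ≤ a)
    (p : ℕ × ℕ → Prop) [DecidablePred p] :
    (((glueCol (a + b) π₀ hπ).cells \ (glueCol a μ₀ ha).cells).filter
        fun c => 1 ≤ c.2 ∧ p (c.1, c.2 - 1)).card =
      ((π₀.cells \ μ₀.cells).filter p).card := by
  apply Finset.card_nbij' (fun c => (c.1, c.2 - 1)) (fun c => (c.1, c.2 + 1))
  · rintro ⟨i, j⟩ hm
    rw [Finset.mem_coe, Finset.mem_filter] at hm
    obtain ⟨hS, hj, hp⟩ := hm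
    rw [mem_skew_glueCol] at hS
    rcases hS with ⟨h0, _⟩ | ⟨_, hm⟩
    · omega
    · exact Finset.mem_filter.mpr ⟨hm, hp⟩
  · rintro ⟨i, j⟩ hm
    rw [Finset.mem_coe, Finset.mem_filter] at hm
    refine Finset.mem_filter.mpr ⟨?_, by dsimp only; omega, by simpa using hm.2⟩
    rw [mem_skew_glueCol]
    exact Or.inr ⟨by omega, by simpa using hm.1⟩
  · rintro ⟨i, j⟩ hm
    rw [Finset.mem_coe, Finset.mem_filter] at hm
    obtain ⟨_, hj, _⟩ := hm
    show (i, j - 1 + 1) = (i, j)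
    rw [Prod.mk.injEq]
    constructor
    · rfl
    · omega
  · rintro ⟨i, j⟩ _
    show (i, j + 1 - 1) = (i, j)
    rw [Prod.mk.injEq]
    constructor
    · rfl
    · omega

/-- Adding a column of height `a` to `μ₀`, `b` to `ν₀` and `a + b` to `π₀` preserves
the existence of LR fillings. -/
def LRFilling.glueColFilling (F : LRFilling π₀ μ₀ ν₀) {a b : ℕ}
    (ha : μ₀.colLen 0 ≤ a) (hb : ν₀.colLen 0 ≤ b) (hπ : π₀.colLen 0 ≤ a + b) :
    LRFilling (glueCol (a + b) π₀ hπ) (glueCol a μ₀ ha) (glueCol b ν₀ hb) where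
  le := by
    rw [← YoungDiagram.cells_subset_iff]
    intro c hc
    rw [YoungDiagram.mem_cells] at hc ⊢
    obtain ⟨i, j⟩ := c
    rw [mem_glueCol] at hc ⊢
    rcases hc with ⟨rfl, hj⟩ | ⟨hi, hm⟩
    · exact Or.inl ⟨rfl, by omega⟩
    · exact Or.inr ⟨hi, YoungDiagram.cells_subset_iff.mpr F.le (by simpa using hm)⟩
  entry := colGlueEntry F a b
  zeros := by
    intro i j hn
    rcases Nat.eq_zero_or_pos j with rfl | hpos
    · apply colGlueEntry_col0_notmem
      intro hr
      exact hn ((mem_skew_glueCol hπ ha).mpr (Or.inl ⟨rfl, hr⟩))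
    · apply colGlueEntry_pos_notmem F hpos
      intro hm
      exact hn ((mem_skew_glueCol hπ ha).mpr (Or.inr ⟨hpos, hm⟩))
  row_weak := by
    intro i j h1 h2
    rw [mem_skew_glueCol] at h1 h2
    have hm2 : (i, j + 1 - 1) ∈ π₀.cells \ μ₀.cells := by
      rcases h2 with h | h; · omega
      exact h.2
    rw [colGlueEntry_pos F (by omega) hm2]
    rcases Nat.eq_zero_or_pos j with rfl | hpos
    · have hr : a ≤ i ∧ i < a + b := by
        rcases h1 with h | h
        · exact h.2
        · omega
      rw [colGlueEntry_col0_mem F hr]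
      have hcol := F.entry_col0_ge i (by simpa using hm2)
      calc i - a ≤ i - μ₀.colLen 0 := by omega
        _ ≤ F.entry i 0 := by simpa using hcol
        _ = F.entry i (0 + 1 - 1) := by norm_num
    · have hm1 : (i, j - 1) ∈ π₀.cells \ μ₀.cells := by
        rcases h1 with h | h; · omega
        exact h.2
      rw [colGlueEntry_pos F hpos hm1]
      have := F.row_weak i (j - 1) hm1 (by
        have heq : (i, j - 1 + 1) = (i, j + 1 - 1) := by rw [Prod.mk.injEq]; omega
        rw [heq]; exact hm2)
      have heq2 : j + 1 - 1 = j - 1 + 1 := by omega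
      rw [heq2]
      exact this
  col_strict := by
    intro i j h1 h2
    rw [mem_skew_glueCol] at h1 h2
    rcases Nat.eq_zero_or_pos j with rfl | hpos
    · have hr1 : a ≤ i ∧ i < a + b := by
        rcases h1 with h | h
        · exact h.2
        · omega
      have hr2 : a ≤ i + 1 ∧ i + 1 < a + b := by
        rcases h2 with h | h
        · exact h.2
        · omega
      rw [colGlueEntry_col0_mem F hr1, colGlueEntry_col0_mem F hr2]
      omega
    · have hm1 : (i, j - 1) ∈ π₀.cells \ μ₀.cells := by
        rcases h1 with h | h; · omega
        exact h.2
      have hm2 : (i + 1, j - 1) ∈ π₀.cells \ μ₀.cells := by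
        rcases h2 with h | h; · omega
        exact h.2
      rw [colGlueEntry_pos F hpos hm1, colGlueEntry_pos F hpos hm2]
      exact F.col_strict i (j - 1) hm1 hm2
  content := by
    intro k
    rw [card_filter_split, rowLen_glueCol]
    have hpart1 : (((glueCol (a + b) π₀ hπ).cells \ (glueCol a μ₀ ha).cells).filter
        fun c => c.2 = 0 ∧ colGlueEntry F a b c.1 c.2 = k).card =
        if k < b then 1 else 0 := by
      by_cases hkb : k < b
      · rw [if_pos hkb]
        rw [show (((glueCol (a + b) π₀ hπ).cells \ (glueCol a μ₀ ha).cells).filter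
            fun c => c.2 = 0 ∧ colGlueEntry F a b c.1 c.2 = k) = {(a + k, 0)} from ?_]
        · exact Finset.card_singleton _
        ext ⟨i, j⟩
        rw [Finset.mem_filter, mem_skew_glueCol, Finset.mem_singleton, Prod.mk.injEq]
        constructor
        · rintro ⟨hm, rfl, he⟩
          have hr : a ≤ i ∧ i < a + b := by
            rcases hm with h | h
            · exact h.2
            · omega
          rw [colGlueEntry_col0_mem F hr] at he
          omega
        · rintro ⟨rfl, rfl⟩
          refine ⟨Or.inl ⟨rfl, by omega, by omega⟩, rfl, ?_⟩
          rw [colGlueEntry_col0_mem F ⟨by omega, by omega⟩]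
          omega
      · rw [if_neg hkb, Finset.card_eq_zero, Finset.filter_eq_empty_iff]
        rintro ⟨i, j⟩ hm ⟨hj0, he⟩
        rw [mem_skew_glueCol] at hm
        have hj0' : j = 0 := hj0
        subst hj0'
        have hr : a ≤ i ∧ i < a + b := by
          rcases hm with h | h
          · exact h.2
          · omega
        rw [colGlueEntry_col0_mem F hr] at he
        omega
    have hpart2 : (((glueCol (a + b) π₀ hπ).cells \ (glueCol a μ₀ ha).cells).filter
        fun c => 1 ≤ c.2 ∧ colGlueEntry F a b c.1 c.2 = k).card = ν₀.rowLen k := by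
      rw [show (((glueCol (a + b) π₀ hπ).cells \ (glueCol a μ₀ ha).cells).filter
          fun c => 1 ≤ c.2 ∧ colGlueEntry F a b c.1 c.2 = k) =
          (((glueCol (a + b) π₀ hπ).cells \ (glueCol a μ₀ ha).cells).filter
          fun c => 1 ≤ c.2 ∧ (fun d : ℕ × ℕ => F.entry d.1 d.2 = k) (c.1, c.2 - 1)) from ?_]
      · rw [colGlue_shift_card F hπ ha (fun d : ℕ × ℕ => F.entry d.1 d.2 = k), ← F.content k]
      apply Finset.filter_congr
      rintro ⟨i, j⟩ hm
      rw [mem_skew_glueCol] at hm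
      simp only
      rcases hm with ⟨rfl, _, _⟩ | ⟨hj, hm₀⟩
      · constructor
        · rintro ⟨h, _⟩; omega
        · rintro ⟨h, _⟩; omega
      · rw [colGlueEntry_pos F hj hm₀]
    rw [hpart1, hpart2]
    omega
  lattice := by
    intro i j k
    have key : ∀ m, (((glueCol (a + b) π₀ hπ).cells \ (glueCol a μ₀ ha).cells).filter
          fun c => (c.1 < i ∨ (c.1 = i ∧ j ≤ c.2)) ∧ colGlueEntry F a b c.1 c.2 = m).card =
        ((π₀.cells \ μ₀.cells).filter
          fun c => (c.1 < i ∨ (c.1 = i ∧ j - 1 ≤ c.2)) ∧ F.entry c.1 c.2 = m).card +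
        (if m < b ∧ (a + m < i ∨ (a + m = i ∧ j = 0)) then 1 else 0) := by
      intro m
      rw [card_filter_split]
      have hpart1 : (((glueCol (a + b) π₀ hπ).cells \ (glueCol a μ₀ ha).cells).filter
          fun c => c.2 = 0 ∧ ((c.1 < i ∨ (c.1 = i ∧ j ≤ c.2)) ∧
            colGlueEntry F a b c.1 c.2 = m)).card =
          if m < b ∧ (a + m < i ∨ (a + m = i ∧ j = 0)) then 1 else 0 := by
        by_cases hχ : m < b ∧ (a + m < i ∨ (a + m = i ∧ j = 0))
        · rw [if_pos hχ]
          rw [show (((glueCol (a + b) π₀ hπ).cells \ (glueCol a μ₀ ha).cells).filter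
              fun c => c.2 = 0 ∧ ((c.1 < i ∨ (c.1 = i ∧ j ≤ c.2)) ∧
                colGlueEntry F a b c.1 c.2 = m)) = {(a + m, 0)} from ?_]
          · exact Finset.card_singleton _
          ext ⟨ci, cj⟩
          rw [Finset.mem_filter, mem_skew_glueCol, Finset.mem_singleton, Prod.mk.injEq]
          constructor
          · rintro ⟨hm', rfl, _, he⟩
            have hr : a ≤ ci ∧ ci < a + b := by
              rcases hm' with h | h
              · exact h.2
              · omega
            rw [colGlueEntry_col0_mem F hr] at he
            omega
          · rintro ⟨rfl, rfl⟩
            refine ⟨Or.inl ⟨rfl, by omega, by omega⟩, rfl, by omega, ?_⟩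
            rw [colGlueEntry_col0_mem F ⟨by omega, by omega⟩]
            omega
        · rw [if_neg hχ, Finset.card_eq_zero, Finset.filter_eq_empty_iff]
          rintro ⟨ci, cj⟩ hm' ⟨hj0, hcond, he⟩
          rw [mem_skew_glueCol] at hm'
          have hj0' : cj = 0 := hj0
          subst hj0'
          have hr : a ≤ ci ∧ ci < a + b := by
            rcases hm' with h | h
            · exact h.2
            · omega
          rw [colGlueEntry_col0_mem F hr] at he
          apply hχ
          constructor
          · omega
          · rcases hcond with h | h
            · left; omega
            · right; omega
      have hpart2 : (((glueCol (a + b) π₀ hπ).cells \ (glueCol a μ₀ ha).cells).filter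
          fun c => 1 ≤ c.2 ∧ ((c.1 < i ∨ (c.1 = i ∧ j ≤ c.2)) ∧
            colGlueEntry F a b c.1 c.2 = m)).card =
          ((π₀.cells \ μ₀.cells).filter
            fun c => (c.1 < i ∨ (c.1 = i ∧ j - 1 ≤ c.2)) ∧ F.entry c.1 c.2 = m).card := by
        rw [show (((glueCol (a + b) π₀ hπ).cells \ (glueCol a μ₀ ha).cells).filter
            fun c => 1 ≤ c.2 ∧ ((c.1 < i ∨ (c.1 = i ∧ j ≤ c.2)) ∧
              colGlueEntry F a b c.1 c.2 = m)) =
            (((glueCol (a + b) π₀ hπ).cells \ (glueCol a μ₀ ha).cells).filter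
            fun c => 1 ≤ c.2 ∧ (fun d : ℕ × ℕ =>
              (d.1 < i ∨ (d.1 = i ∧ j - 1 ≤ d.2)) ∧ F.entry d.1 d.2 = m)
                (c.1, c.2 - 1)) from ?_]
        · exact colGlue_shift_card F hπ ha (fun d : ℕ × ℕ =>
            (d.1 < i ∨ (d.1 = i ∧ j - 1 ≤ d.2)) ∧ F.entry d.1 d.2 = m)
        apply Finset.filter_congr
        rintro ⟨ci, cj⟩ hm'
        rw [mem_skew_glueCol] at hm'
        simp only
        rcases hm' with ⟨rfl, _, _⟩ | ⟨hj, hm₀⟩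
        · constructor
          · rintro ⟨h, _⟩; omega
          · rintro ⟨h, _⟩; omega
        · rw [colGlueEntry_pos F hj hm₀]
          constructor
          · rintro ⟨hcj, hcond, he⟩
            exact ⟨hcj, by omega, he⟩
          · rintro ⟨hcj, hcond, he⟩
            exact ⟨hcj, by omega, he⟩
      rw [hpart1, hpart2]
      omega
    rw [key (k + 1), key k]
    have hlat := F.lattice i (j - 1) k
    have hχ : (if k + 1 < b ∧ (a + (k + 1) < i ∨ (a + (k + 1) = i ∧ j = 0)) then 1 else 0) ≤
        (if k < b ∧ (a + k < i ∨ (a + k = i ∧ j = 0)) then 1 else 0) := by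
      by_cases h1 : k + 1 < b ∧ (a + (k + 1) < i ∨ (a + (k + 1) = i ∧ j = 0))
      · rw [if_pos h1, if_pos ⟨by omega, Or.inl (by omega)⟩]
      · rw [if_neg h1]
        omega
    omega

end Aux6
section Main

open YoungDiagram

lemma eq_bot_of_rowLen0 {μ : YoungDiagram} (h : μ.rowLen 0 = 0) : μ = ⊥ := by
  ext ⟨i, j⟩
  simp only [YoungDiagram.mem_cells, YoungDiagram.cells_bot, Finset.notMem_empty, iff_false]
  intro hm
  have h0 : (0, 0) ∈ μ := μ.up_left_mem (Nat.zero_le _) (Nat.zero_le _) hm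
  rw [YoungDiagram.mem_iff_lt_rowLen] at h0
  omega

lemma key_lemma : ∀ (w : List Bool) (μ ν : YoungDiagram),
    μ.rowLen (w.count true) ≤ w.count false →
    ν.rowLen (w.count true) ≤ w.count false →
    ∃ π : YoungDiagram,
      wNotation w π = List.zipWith (· + ·) (wNotation w μ) (wNotation w ν) ∧
      Nonempty (LRFilling π μ ν) := by
  intro w
  induction w with
  | nil =>
    intro μ ν hμ hν
    simp only [List.count_nil] at hμ hν
    have hμ' : μ = ⊥ := eq_bot_of_rowLen0 (by omega)
    have hν' : ν = ⊥ := eq_bot_of_rowLen0 (by omega)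
    subst hμ'; subst hν'
    exact ⟨⊥, by simp [wNotation, wPieces], ⟨LRFilling.botFilling⟩⟩
  | cons hd w ih =>
    intro μ ν hμ hν
    cases hd with
    | true =>
      have hct : (true :: w).count true = w.count true + 1 := by simp
      have hcf : (true :: w).count false = w.count false := by simp
      rw [hct, hcf] at hμ hν
      obtain ⟨π₀, heq, ⟨F⟩⟩ := ih (stripRow μ) (stripRow ν)
        (by rw [rowLen_stripRow]; exact hμ) (by rw [rowLen_stripRow]; exact hν)
      have ha : (stripRow μ).rowLen 0 ≤ μ.rowLen 0 := by
        rw [rowLen_stripRow]; exact μ.rowLen_anti 0 1 (by omega)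
      have hb : (stripRow ν).rowLen 0 ≤ ν.rowLen 0 := by
        rw [rowLen_stripRow]; exact ν.rowLen_anti 0 1 (by omega)
      have hπ : π₀.rowLen 0 ≤ μ.rowLen 0 + ν.rowLen 0 :=
        le_trans F.rowLen0_le (by omega)
      refine ⟨glueRow (μ.rowLen 0 + ν.rowLen 0) π₀ hπ, ?_, ?_⟩
      · rw [wNotation_cons_true, wNotation_cons_true, wNotation_cons_true,
          rowLen_glueRow_zero, stripRow_glueRow, List.zipWith_cons_cons, heq]
      · have G := F.glueRowFilling ha hb hπ
        have hμeq : glueRow (μ.rowLen 0) (stripRow μ) ha = μ := glueRow_stripRow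
        have hνeq : glueRow (ν.rowLen 0) (stripRow ν) hb = ν := glueRow_stripRow
        rw [hμeq, hνeq] at G
        exact ⟨G⟩
    | false =>
      have hct : (false :: w).count true = w.count true := by simp
      have hcf : (false :: w).count false = w.count false + 1 := by simp
      rw [hct, hcf] at hμ hν
      obtain ⟨π₀, heq, ⟨F⟩⟩ := ih (stripCol μ) (stripCol ν)
        (by rw [rowLen_stripCol]; omega) (by rw [rowLen_stripCol]; omega)
      have ha : (stripCol μ).colLen 0 ≤ μ.colLen 0 := by
        rw [colLen_stripCol]; exact μ.colLen_anti 0 1 (by omega)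
      have hb : (stripCol ν).colLen 0 ≤ ν.colLen 0 := by
        rw [colLen_stripCol]; exact ν.colLen_anti 0 1 (by omega)
      have hπ : π₀.colLen 0 ≤ μ.colLen 0 + ν.colLen 0 :=
        le_trans F.colLen0_le (by omega)
      refine ⟨glueCol (μ.colLen 0 + ν.colLen 0) π₀ hπ, ?_, ?_⟩
      · rw [wNotation_cons_false, wNotation_cons_false, wNotation_cons_false,
          colLen_glueCol_zero, stripCol_glueCol, List.zipWith_cons_cons, heq]
      · have G := F.glueColFilling ha hb hπ
        have hμeq : glueCol (μ.colLen 0) (stripCol μ) ha = μ := glueCol_stripCol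
        have hνeq : glueCol (ν.colLen 0) (stripCol ν) hb = ν := glueCol_stripCol
        rw [hμeq, hνeq] at G
        exact ⟨G⟩

end Main
/-- If `w` is a word with `c` `h`'s and `d` `v`'s and `μ`, `ν` are
partitions with at most `c` parts larger than `d`, then there is a partition `π` whose
`w`-notation is the entrywise sum of those of `μ` and `ν`, and `s_π` appears in the Schur
expansion of `s_μ ⬝ s_ν`, i.e. `c^π_{μν} ≠ 0`. -/
theorem statement0 (c d : ℕ) (w : List Bool) (hlen : w.length = c + d)
    (hc : w.count true = c) (hd : w.count false = d)
    (μ ν : YoungDiagram) (hμ : μ.rowLen c ≤ d) (hν : ν.rowLen c ≤ d) :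
    ∃ π : YoungDiagram,
      wNotation w π = List.zipWith (· + ·) (wNotation w μ) (wNotation w ν) ∧
      lrCoeff π μ ν ≠ 0 := by
  obtain ⟨π, h1, h2⟩ := key_lemma w μ ν (by rw [hc, hd]; exact hμ) (by rw [hc, hd]; exact hν)
  exact ⟨π, h1, LRFilling.lrCoeff_ne_zero h2⟩
end

section
/- Fix odd positive integers a and b and let R = (b^a). Then the products s_λ s_{λ^c}, where λ runs over one representative of each unordered almost-self-complementary pair {λ, λ^c} of partitions contained in R, are linearly independent over ℚ in Λ. -/
open scoped Classical

section Aux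

open Finset

lemma rowLen_eq_of_iff {μ : YoungDiagram} {i k : ℕ} (h : ∀ j, (i, j) ∈ μ ↔ j < k) :
    μ.rowLen i = k := by
  have h1 := h (μ.rowLen i)
  have h2 := h k
  rw [YoungDiagram.mem_iff_lt_rowLen] at h1 h2
  omega

lemma mem_rect {a b i j : ℕ} : (i, j) ∈ rect a b ↔ i < a ∧ j < b := by
  show (i, j) ∈ (Finset.range a ×ˢ Finset.range b) ↔ _
  simp

lemma mem_rectCompl {a b : ℕ} {μ : YoungDiagram} {i j : ℕ} :
    (i, j) ∈ rectCompl a b μ ↔ (i < a ∧ j < b) ∧ (a - 1 - i, b - 1 - j) ∉ μ := by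
  show (i, j) ∈ (rect a b).cells.filter _ ↔ _
  rw [Finset.mem_filter]
  rw [YoungDiagram.mem_cells, mem_rect]

lemma rectCompl_le {a b : ℕ} {μ : YoungDiagram} : rectCompl a b μ ≤ rect a b :=
  fun c hc => (Finset.mem_filter.mp hc).1

lemma rowLen_le_b {a b : ℕ} {μ : YoungDiagram} (hμ : μ ≤ rect a b) (i : ℕ) :
    μ.rowLen i ≤ b := by
  by_contra h
  have h1 : (i, b) ∈ μ := YoungDiagram.mem_iff_lt_rowLen.mpr (by omega)
  have h2 : (i, b) ∈ rect a b := hμ h1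
  rw [mem_rect] at h2
  omega

lemma rowLen_eq_zero_of_ge {a b : ℕ} {μ : YoungDiagram} (hμ : μ ≤ rect a b) {i : ℕ}
    (h : a ≤ i) : μ.rowLen i = 0 := by
  apply rowLen_eq_of_iff
  intro j
  simp only [Nat.not_lt_zero, iff_false]
  intro hm
  have h2 : (i, j) ∈ rect a b := hμ hm
  rw [mem_rect] at h2
  omega

lemma rowLen_rectCompl {a b : ℕ} {μ : YoungDiagram} (hμ : μ ≤ rect a b) {i : ℕ} (hi : i < a) :
    (rectCompl a b μ).rowLen i = b - μ.rowLen (a - 1 - i) := by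
  have hL : μ.rowLen (a - 1 - i) ≤ b := rowLen_le_b hμ _
  apply rowLen_eq_of_iff
  intro j
  rw [mem_rectCompl, YoungDiagram.mem_iff_lt_rowLen]
  omega

lemma yd_ext {μ ν : YoungDiagram} (h : ∀ i, μ.rowLen i = ν.rowLen i) : μ = ν := by
  apply YoungDiagram.ext
  ext ⟨i, j⟩
  rw [YoungDiagram.mem_cells, YoungDiagram.mem_cells, YoungDiagram.mem_iff_lt_rowLen,
    YoungDiagram.mem_iff_lt_rowLen, h i]

lemma rectCompl_rectCompl {a b : ℕ} {μ : YoungDiagram} (hμ : μ ≤ rect a b) :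
    rectCompl a b (rectCompl a b μ) = μ := by
  apply yd_ext
  intro i
  rcases lt_or_ge i a with h | h
  · rw [rowLen_rectCompl rectCompl_le h, rowLen_rectCompl hμ (by omega)]
    have e : a - 1 - (a - 1 - i) = i := by omega
    rw [e]
    have := rowLen_le_b hμ i
    omega
  · rw [rowLen_eq_zero_of_ge rectCompl_le h, rowLen_eq_zero_of_ge hμ h]

end Aux
section Aux2

open Finset

lemma asc_mem_iff {a b : ℕ} {lam : YoungDiagram} (h : AlmostSelfCompl a b lam) {c : ℕ × ℕ}
    (hc : c ≠ ((a - 1) / 2, (b - 1) / 2)) : c ∈ lam ↔ c ∈ rectCompl a b lam := by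
  obtain ⟨-, h2⟩ := h
  constructor <;> intro hm <;> by_contra hn
  · have hu : c ∈ lam.cells \ (rectCompl a b lam).cells ∪ (rectCompl a b lam).cells \ lam.cells :=
      Finset.mem_union_left _ (Finset.mem_sdiff.mpr ⟨hm, hn⟩)
    rw [h2] at hu
    exact hc (Finset.mem_singleton.mp hu)
  · have hu : c ∈ lam.cells \ (rectCompl a b lam).cells ∪ (rectCompl a b lam).cells \ lam.cells :=
      Finset.mem_union_right _ (Finset.mem_sdiff.mpr ⟨hm, hn⟩)
    rw [h2] at hu
    exact hc (Finset.mem_singleton.mp hu)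

lemma asc_central {a b : ℕ} {lam : YoungDiagram} (h : AlmostSelfCompl a b lam) :
    (((a - 1) / 2, (b - 1) / 2) ∈ lam ∧ ((a - 1) / 2, (b - 1) / 2) ∉ rectCompl a b lam) ∨
    (((a - 1) / 2, (b - 1) / 2) ∉ lam ∧ ((a - 1) / 2, (b - 1) / 2) ∈ rectCompl a b lam) := by
  have hu : ((a - 1) / 2, (b - 1) / 2) ∈
      lam.cells \ (rectCompl a b lam).cells ∪ (rectCompl a b lam).cells \ lam.cells := by
    rw [h.2]; exact Finset.mem_singleton_self _
  rcases Finset.mem_union.mp hu with h' | h'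
  · exact Or.inl (Finset.mem_sdiff.mp h')
  · exact Or.inr (Finset.mem_sdiff.mp h').symm

lemma asc_ne {a b : ℕ} {lam : YoungDiagram} (h : AlmostSelfCompl a b lam) :
    lam ≠ rectCompl a b lam := by
  intro he
  rcases asc_central h with ⟨h1, h2⟩ | ⟨h1, h2⟩
  · exact h2 (he ▸ h1)
  · exact h1 (he ▸ h2)

lemma asc_compl {a b : ℕ} {lam : YoungDiagram} (h : AlmostSelfCompl a b lam) :
    AlmostSelfCompl a b (rectCompl a b lam) := by
  refine ⟨rectCompl_le, ?_⟩
  rw [rectCompl_rectCompl h.1, Finset.union_comm]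
  exact h.2

lemma rowLen_of_diff {X Y : YoungDiagram} {mr mc : ℕ}
    (hiff : ∀ c : ℕ × ℕ, c ≠ (mr, mc) → (c ∈ X ↔ c ∈ Y))
    (hX : (mr, mc) ∈ X) (hY : (mr, mc) ∉ Y) :
    X.rowLen mr = mc + 1 ∧ Y.rowLen mr = mc := by
  constructor
  · apply rowLen_eq_of_iff
    intro j
    constructor
    · intro hj
      by_contra hcon
      push_neg at hcon
      have h1 : (mr, mc + 1) ∈ X := X.up_left_mem le_rfl (by omega) hj
      have h2 : (mr, mc + 1) ∈ Y :=
        (hiff _ (by simp only [ne_eq, Prod.mk.injEq]; omega)).mp h1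
      exact hY (Y.up_left_mem le_rfl (by omega) h2)
    · intro hj
      exact X.up_left_mem le_rfl (by omega) hX
  · apply rowLen_eq_of_iff
    intro j
    constructor
    · intro hj
      by_contra hcon
      push_neg at hcon
      exact hY (Y.up_left_mem le_rfl (by omega) hj)
    · intro hj
      have h1 : (mr, j) ∈ X := X.up_left_mem le_rfl (by omega) hX
      exact (hiff _ (by simp only [ne_eq, Prod.mk.injEq]; omega)).mp h1

lemma asc_rowLen_ne {a b : ℕ} {lam : YoungDiagram} (h : AlmostSelfCompl a b lam) {i : ℕ}
    (hi : i ≠ (a - 1) / 2) : lam.rowLen i = (rectCompl a b lam).rowLen i := by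
  apply rowLen_eq_of_iff
  intro j
  rw [← YoungDiagram.mem_iff_lt_rowLen]
  exact asc_mem_iff h (by simp only [ne_eq, Prod.mk.injEq, not_and]; intro h'; exact absurd h' hi)

lemma asc_rowLen_central {a b : ℕ} {lam : YoungDiagram} (h : AlmostSelfCompl a b lam) :
    (lam.rowLen ((a - 1) / 2) = (b - 1) / 2 + 1 ∧
      (rectCompl a b lam).rowLen ((a - 1) / 2) = (b - 1) / 2) ∨
    (lam.rowLen ((a - 1) / 2) = (b - 1) / 2 ∧
      (rectCompl a b lam).rowLen ((a - 1) / 2) = (b - 1) / 2 + 1) := by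
  rcases asc_central h with ⟨h1, h2⟩ | ⟨h1, h2⟩
  · exact Or.inl (rowLen_of_diff (fun c hc => asc_mem_iff h hc) h1 h2)
  · exact Or.inr (And.symm (rowLen_of_diff (fun c hc => (asc_mem_iff h hc).symm) h2 h1))

lemma asc_offcenter {a b : ℕ} (ha : Odd a) {lam : YoungDiagram}
    (h : AlmostSelfCompl a b lam) {i : ℕ} (hia : i < a) (hi : i ≠ (a - 1) / 2) :
    (rectCompl a b lam).rowLen i = lam.rowLen i := by
  obtain ⟨t, rfl⟩ := ha
  have hmr : (2 * t + 1 - 1) / 2 = t := by omega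
  have hrefl : 2 * t + 1 - 1 - i < 2 * t + 1 := by omega
  have hrefl_ne : 2 * t + 1 - 1 - i ≠ (2 * t + 1 - 1) / 2 := by omega
  have e1 : (rectCompl (2 * t + 1) b lam).rowLen i = b - lam.rowLen (2 * t + 1 - 1 - i) :=
    rowLen_rectCompl h.1 hia
  have e2 : lam.rowLen (2 * t + 1 - 1 - i) =
      (rectCompl (2 * t + 1) b lam).rowLen (2 * t + 1 - 1 - i) := asc_rowLen_ne h hrefl_ne
  have e3 : (rectCompl (2 * t + 1) b lam).rowLen (2 * t + 1 - 1 - i) =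
      b - lam.rowLen (2 * t + 1 - 1 - (2 * t + 1 - 1 - i)) := rowLen_rectCompl h.1 hrefl
  have e4 : 2 * t + 1 - 1 - (2 * t + 1 - 1 - i) = i := by omega
  rw [e4] at e3
  have h5 : lam.rowLen i ≤ b := rowLen_le_b h.1 i
  have h6 : lam.rowLen (2 * t + 1 - 1 - i) ≤ b := rowLen_le_b h.1 _
  omega

lemma asc_unique {a b : ℕ} (ha : Odd a) (hb : Odd b) {lam mu : YoungDiagram}
    (hl : AlmostSelfCompl a b lam) (hm : AlmostSelfCompl a b mu)
    (hsum : ∀ i, mu.rowLen i + (rectCompl a b mu).rowLen i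
              = lam.rowLen i + (rectCompl a b lam).rowLen i) :
    mu = lam ∨ mu = rectCompl a b lam := by
  have hoff : ∀ i, i ≠ (a - 1) / 2 → mu.rowLen i = lam.rowLen i := by
    intro i hi
    rcases lt_or_ge i a with hia | hia
    · have := hsum i
      rw [asc_offcenter ha hl hia hi, asc_offcenter ha hm hia hi] at this
      omega
    · rw [rowLen_eq_zero_of_ge hl.1 hia, rowLen_eq_zero_of_ge hm.1 hia]
  have hoffc : ∀ i, i ≠ (a - 1) / 2 → (rectCompl a b lam).rowLen i = lam.rowLen i := by
    intro i hi
    rcases lt_or_ge i a with hia | hia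
    · exact asc_offcenter ha hl hia hi
    · rw [rowLen_eq_zero_of_ge hl.1 hia, rowLen_eq_zero_of_ge rectCompl_le hia]
  rcases asc_rowLen_central hl with ⟨hl1, hl2⟩ | ⟨hl1, hl2⟩ <;>
    rcases asc_rowLen_central hm with ⟨hm1, hm2⟩ | ⟨hm1, hm2⟩
  · exact Or.inl (yd_ext fun i => by
      by_cases hi : i = (a - 1) / 2
      · rw [hi, hm1, hl1]
      · exact hoff i hi)
  · exact Or.inr (yd_ext fun i => by
      by_cases hi : i = (a - 1) / 2
      · rw [hi, hm1, hl2]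
      · rw [hoff i hi, hoffc i hi])
  · exact Or.inr (yd_ext fun i => by
      by_cases hi : i = (a - 1) / 2
      · rw [hi, hm1, hl2]
      · rw [hoff i hi, hoffc i hi])
  · exact Or.inl (yd_ext fun i => by
      by_cases hi : i = (a - 1) / 2
      · rw [hi, hm1, hl1]
      · exact hoff i hi)

end Aux2
section Aux3

open Finset

lemma sum_card_filter_eq (s : Finset (ℕ × ℕ)) (f : ℕ × ℕ → ℕ) (k : ℕ) :
    ∑ i ∈ Finset.range k, (s.filter fun c => f c = i).card
      = (s.filter fun c => f c < k).card := by
  induction k with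
  | zero => simp
  | succ k ih =>
      rw [Finset.sum_range_succ, ih]
      have hsplit : (s.filter fun c => f c < k + 1)
          = (s.filter fun c => f c < k) ∪ (s.filter fun c => f c = k) := by
        rw [← Finset.filter_or]
        apply Finset.filter_congr
        intro c _
        constructor <;> intro h' <;> omega
      rw [hsplit, Finset.card_union_of_disjoint (by
        rw [Finset.disjoint_left]
        intro c hc1 hc2
        rw [Finset.mem_filter] at hc1 hc2
        omega)]

lemma card_filter_row_lt (μ : YoungDiagram) (k : ℕ) :
    (μ.cells.filter fun c => c.1 < k).card = ∑ i ∈ Finset.range k, μ.rowLen i := by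
  rw [← sum_card_filter_eq μ.cells (fun c => c.1) k]
  apply Finset.sum_congr rfl
  intro i _
  rw [YoungDiagram.rowLen_eq_card]
  rfl

lemma le_entry {μ : YoungDiagram} (T : SemistandardYoungTableau μ) :
    ∀ i j, (i, j) ∈ μ → i ≤ T i j := by
  intro i
  induction i with
  | zero => intro j _; exact Nat.zero_le _
  | succ i ih =>
      intro j hm
      have h1 : (i, j) ∈ μ := μ.up_left_mem (Nat.le_succ i) le_rfl hm
      have h2 := T.col_strict (Nat.lt_succ_self i) hm
      have h3 := ih j h1
      simp only [Nat.succ_eq_add_one] at h2 hm ⊢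
      omega

lemma weight_entry_lt {μ : YoungDiagram} (T : SemistandardYoungTableau μ) (p : ℕ → ℕ)
    (hT : ∀ k, (μ.cells.filter fun c => T c.1 c.2 = k).card = p k) (k : ℕ) :
    ∑ i ∈ Finset.range k, p i = (μ.cells.filter fun c => T c.1 c.2 < k).card := by
  rw [← sum_card_filter_eq μ.cells (fun c => T c.1 c.2) k]
  exact Finset.sum_congr rfl fun i _ => (hT i).symm

lemma weight_partial_sum {μ : YoungDiagram} (T : SemistandardYoungTableau μ) (p : ℕ → ℕ)
    (hT : ∀ k, (μ.cells.filter fun c => T c.1 c.2 = k).card = p k) (k : ℕ) :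
    ∑ i ∈ Finset.range k, p i ≤ ∑ i ∈ Finset.range k, μ.rowLen i := by
  rw [← card_filter_row_lt, weight_entry_lt T p hT k]
  apply Finset.card_le_card
  intro c hc
  rw [Finset.mem_filter] at hc ⊢
  refine ⟨hc.1, lt_of_le_of_lt (le_entry T c.1 c.2 ?_) hc.2⟩
  rw [← YoungDiagram.mem_cells]
  exact hc.1

lemma weight_total {μ : YoungDiagram} (T : SemistandardYoungTableau μ) (p : ℕ → ℕ)
    (hT : ∀ k, (μ.cells.filter fun c => T c.1 c.2 = k).card = p k) (a : ℕ)
    (hp : ∀ i, a ≤ i → p i = 0) :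
    ∑ i ∈ Finset.range a, p i = μ.cells.card := by
  rw [weight_entry_lt T p hT a]
  congr 1
  apply Finset.filter_true_of_mem
  intro c hc
  by_contra h
  have h0 : (μ.cells.filter fun c' => T c'.1 c'.2 = T c.1 c.2).card = 0 := by
    rw [hT]
    exact hp _ (le_of_not_gt h)
  rw [Finset.card_eq_zero] at h0
  have hcm : c ∈ μ.cells.filter fun c' => T c'.1 c'.2 = T c.1 c.2 :=
    Finset.mem_filter.mpr ⟨hc, rfl⟩
  rw [h0] at hcm
  exact absurd hcm (Finset.notMem_empty c)

lemma sum_rowLen_card {a b : ℕ} {μ : YoungDiagram} (hμ : μ ≤ rect a b) :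
    ∑ i ∈ Finset.range a, μ.rowLen i = μ.cells.card := by
  rw [← card_filter_row_lt]
  congr 1
  apply Finset.filter_true_of_mem
  rintro ⟨i, j⟩ hc
  have h2 : (i, j) ∈ rect a b := hμ hc
  rw [mem_rect] at h2
  exact h2.1

lemma card_compl_add {a b : ℕ} {μ : YoungDiagram} (hμ : μ ≤ rect a b) :
    (rectCompl a b μ).cells.card + μ.cells.card = a * b := by
  rw [← sum_rowLen_card (rectCompl_le (a := a) (b := b)), ← sum_rowLen_card hμ]
  have h1 : ∑ i ∈ Finset.range a, (rectCompl a b μ).rowLen i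
      = ∑ i ∈ Finset.range a, (b - μ.rowLen (a - 1 - i)) := by
    apply Finset.sum_congr rfl
    intro i hi
    rw [Finset.mem_range] at hi
    exact rowLen_rectCompl hμ hi
  rw [h1, Finset.sum_range_reflect (fun i => b - μ.rowLen i) a]
  rw [← Finset.sum_add_distrib]
  have h2 : ∀ i ∈ Finset.range a, b - μ.rowLen i + μ.rowLen i = b := by
    intro i _
    have := rowLen_le_b hμ i
    omega
  rw [Finset.sum_congr rfl h2, Finset.sum_const, Finset.card_range, smul_eq_mul]

end Aux3
section Aux4

open Finset

lemma ssyt_weight_rowLen_unique {μ : YoungDiagram} (T : SemistandardYoungTableau μ)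
    (hT : ∀ k, (μ.cells.filter fun c => T c.1 c.2 = k).card = μ.rowLen k) :
    T = SemistandardYoungTableau.highestWeight μ := by
  have key : ∀ k, (μ.cells.filter fun c => T c.1 c.2 < k) = (μ.cells.filter fun c => c.1 < k) := by
    intro k
    apply Finset.eq_of_subset_of_card_le
    · intro c hc
      rw [Finset.mem_filter] at hc ⊢
      refine ⟨hc.1, lt_of_le_of_lt (le_entry T c.1 c.2 ?_) hc.2⟩
      rw [← YoungDiagram.mem_cells]
      exact hc.1
    · rw [card_filter_row_lt, ← weight_entry_lt T _ hT k]
  ext i j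
  by_cases hm : (i, j) ∈ μ
  · have h1 : i ≤ T i j := le_entry T i j hm
    have h2 : ((i, j) : ℕ × ℕ) ∈ μ.cells.filter fun c => c.1 < i + 1 :=
      Finset.mem_filter.mpr ⟨by rwa [YoungDiagram.mem_cells], Nat.lt_succ_self i⟩
    rw [← key] at h2
    have h3 : T i j < i + 1 := (Finset.mem_filter.mp h2).2
    simp only [SemistandardYoungTableau.highestWeight_apply, if_pos hm]
    omega
  · rw [T.zeros hm]
    simp only [SemistandardYoungTableau.highestWeight_apply, if_neg hm]

lemma highestWeight_weight (μ : YoungDiagram) (k : ℕ) :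
    (μ.cells.filter fun c => SemistandardYoungTableau.highestWeight μ c.1 c.2 = k).card
      = μ.rowLen k := by
  have h : (μ.cells.filter fun c => SemistandardYoungTableau.highestWeight μ c.1 c.2 = k)
      = μ.cells.filter fun c => c.1 = k := by
    apply Finset.filter_congr
    intro c hc
    have hm : ((c.1, c.2) : ℕ × ℕ) ∈ μ := by
      rw [← YoungDiagram.mem_cells]
      exact hc
    simp only [SemistandardYoungTableau.highestWeight_apply, if_pos hm]
  rw [h, YoungDiagram.rowLen_eq_card]
  rfl

lemma schur_eq_one {μ : YoungDiagram} {m : ℕ →₀ ℕ} (hm : ∀ k, (m k : ℕ) = μ.rowLen k) :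
    schur μ m = 1 := by
  show ((Set.ncard {T : SemistandardYoungTableau μ |
      ∀ k : ℕ, (μ.cells.filter fun c => T c.1 c.2 = k).card = m k} : ℕ) : ℚ) = 1
  have h : {T : SemistandardYoungTableau μ |
      ∀ k : ℕ, (μ.cells.filter fun c => T c.1 c.2 = k).card = m k}
      = {SemistandardYoungTableau.highestWeight μ} := by
    ext T
    simp only [Set.mem_setOf_eq, Set.mem_singleton_iff]
    constructor
    · intro h'
      exact ssyt_weight_rowLen_unique T (fun k => (h' k).trans (hm k))
    · rintro rfl k
      rw [highestWeight_weight]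
      exact (hm k).symm
  rw [h, Set.ncard_singleton]
  norm_num

lemma schur_exists_of_ne_zero {μ : YoungDiagram} {m : ℕ →₀ ℕ} (h : schur μ m ≠ 0) :
    ∃ T : SemistandardYoungTableau μ,
      ∀ k : ℕ, (μ.cells.filter fun c => T c.1 c.2 = k).card = m k := by
  have h2 : Set.ncard {T : SemistandardYoungTableau μ |
      ∀ k : ℕ, (μ.cells.filter fun c => T c.1 c.2 = k).card = m k} ≠ 0 := by
    intro h0
    apply h
    show ((Set.ncard {T : SemistandardYoungTableau μ |
      ∀ k : ℕ, (μ.cells.filter fun c => T c.1 c.2 = k).card = m k} : ℕ) : ℚ) = 0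
    rw [h0]
    norm_num
  obtain ⟨T, hT⟩ := Set.nonempty_of_ncard_ne_zero h2
  exact ⟨T, hT⟩

end Aux4
section Aux5

open Finset

/-- Sum over `k ≤ a` of partial sums of `μ.rowLen + (μᶜ).rowLen`; a linear functional
strictly compatible with dominance order. -/
def Fval (a b : ℕ) (mu : YoungDiagram) : ℕ :=
  ∑ k ∈ Finset.range (a + 1), ∑ i ∈ Finset.range k,
    (mu.rowLen i + (rectCompl a b mu).rowLen i)

lemma key_forcing {a b : ℕ} {lam mu : YoungDiagram}
    (hlam : lam ≤ rect a b) (hmu : mu ≤ rect a b)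
    (hmax : Fval a b mu ≤ Fval a b lam)
    (p q : ℕ →₀ ℕ)
    (hpq : ∀ i, p i + q i = lam.rowLen i + (rectCompl a b lam).rowLen i)
    (T1 : SemistandardYoungTableau mu) (T2 : SemistandardYoungTableau (rectCompl a b mu))
    (h1 : ∀ k, (mu.cells.filter fun c => T1 c.1 c.2 = k).card = p k)
    (h2 : ∀ k, ((rectCompl a b mu).cells.filter fun c => T2 c.1 c.2 = k).card = q k) :
    (∀ i, p i = mu.rowLen i) ∧ (∀ i, q i = (rectCompl a b mu).rowLen i) ∧
    (∀ i, mu.rowLen i + (rectCompl a b mu).rowLen i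
        = lam.rowLen i + (rectCompl a b lam).rowLen i) := by
  have hC : rectCompl a b mu ≤ rect a b := rectCompl_le
  have hCl : rectCompl a b lam ≤ rect a b := rectCompl_le
  have hp_le : ∀ k, ∑ i ∈ Finset.range k, p i ≤ ∑ i ∈ Finset.range k, mu.rowLen i :=
    weight_partial_sum T1 _ h1
  have hq_le : ∀ k, ∑ i ∈ Finset.range k, q i
      ≤ ∑ i ∈ Finset.range k, (rectCompl a b mu).rowLen i :=
    weight_partial_sum T2 _ h2
  have hp0 : ∀ i, a ≤ i → p i = 0 := by
    intro i hi
    have e := hpq i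
    rw [rowLen_eq_zero_of_ge hlam hi, rowLen_eq_zero_of_ge hCl hi] at e
    omega
  have hq0 : ∀ i, a ≤ i → q i = 0 := by
    intro i hi
    have e := hpq i
    rw [rowLen_eq_zero_of_ge hlam hi, rowLen_eq_zero_of_ge hCl hi] at e
    omega
  have hptot : ∑ i ∈ Finset.range a, p i = mu.cells.card := weight_total T1 _ h1 a hp0
  have hqtot : ∑ i ∈ Finset.range a, q i = (rectCompl a b mu).cells.card :=
    weight_total T2 _ h2 a hq0
  -- partial sums of the target weight vs. those of `mu + muᶜ`
  have hterm : ∀ k, ∑ i ∈ Finset.range k, (lam.rowLen i + (rectCompl a b lam).rowLen i)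
      ≤ ∑ i ∈ Finset.range k, (mu.rowLen i + (rectCompl a b mu).rowLen i) := by
    intro k
    have e1 : ∑ i ∈ Finset.range k, (lam.rowLen i + (rectCompl a b lam).rowLen i)
        = ∑ i ∈ Finset.range k, p i + ∑ i ∈ Finset.range k, q i := by
      rw [← Finset.sum_add_distrib]
      exact (Finset.sum_congr rfl fun i _ => (hpq i).symm)
    rw [e1, Finset.sum_add_distrib]
    exact Nat.add_le_add (hp_le k) (hq_le k)
  -- equality of partial sums for all k ≤ a
  have heq : ∀ k, k ≤ a → ∑ i ∈ Finset.range k, (lam.rowLen i + (rectCompl a b lam).rowLen i)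
      = ∑ i ∈ Finset.range k, (mu.rowLen i + (rectCompl a b mu).rowLen i) := by
    by_contra hcon
    push_neg at hcon
    obtain ⟨k0, hk0a, hk0⟩ := hcon
    have hk0' : ∑ i ∈ Finset.range k0, (lam.rowLen i + (rectCompl a b lam).rowLen i)
        < ∑ i ∈ Finset.range k0, (mu.rowLen i + (rectCompl a b mu).rowLen i) :=
      lt_of_le_of_ne (hterm k0) hk0
    have hlt : Fval a b lam < Fval a b mu := by
      apply Finset.sum_lt_sum (fun k _ => hterm k)
      exact ⟨k0, Finset.mem_range.mpr (by omega), hk0'⟩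
    omega
  -- the third conclusion
  have hthird : ∀ i, mu.rowLen i + (rectCompl a b mu).rowLen i
      = lam.rowLen i + (rectCompl a b lam).rowLen i := by
    intro i
    rcases lt_or_ge i a with hia | hia
    · have e1 := heq i (by omega)
      have e2 := heq (i + 1) (by omega)
      rw [Finset.sum_range_succ, Finset.sum_range_succ] at e2
      omega
    · rw [rowLen_eq_zero_of_ge hlam hia, rowLen_eq_zero_of_ge hCl hia,
        rowLen_eq_zero_of_ge hmu hia, rowLen_eq_zero_of_ge hC hia]
  -- equality of partial sums of p with those of mu, for all k ≤ a
  have hpeq : ∀ k, k ≤ a → ∑ i ∈ Finset.range k, p i = ∑ i ∈ Finset.range k, mu.rowLen i := by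
    intro k hk
    -- at k = a, totals agree; for k < a use heq
    rcases Nat.eq_or_lt_of_le hk with rfl | hk'
    · rw [hptot, sum_rowLen_card hmu]
    · have e1 := heq k (by omega)
      have e2 : ∑ i ∈ Finset.range k, p i + ∑ i ∈ Finset.range k, q i
          = ∑ i ∈ Finset.range k, mu.rowLen i
            + ∑ i ∈ Finset.range k, (rectCompl a b mu).rowLen i := by
        rw [← Finset.sum_add_distrib, ← Finset.sum_add_distrib,
          Finset.sum_congr rfl fun i _ => hpq i, e1]
      have := hp_le k
      have := hq_le k
      omega
  refine ⟨?_, ?_, hthird⟩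
  · intro i
    rcases lt_or_ge i a with hia | hia
    · have e1 := hpeq i (by omega)
      have e2 := hpeq (i + 1) (by omega)
      rw [Finset.sum_range_succ, Finset.sum_range_succ] at e2
      omega
    · rw [hp0 i hia, rowLen_eq_zero_of_ge hmu hia]
  · intro i
    rcases lt_or_ge i a with hia | hia
    · have e0 := hpq i
      have e1 : p i = mu.rowLen i := by
        have e1 := hpeq i (by omega)
        have e2 := hpeq (i + 1) (by omega)
        rw [Finset.sum_range_succ, Finset.sum_range_succ] at e2
        omega
      have := hthird i
      omega
    · rw [hq0 i hia, rowLen_eq_zero_of_ge hC hia]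

end Aux5
section Aux6

open Finset

/-- The weight (finitely supported function) of a diagram contained in `a` rows. -/
noncomputable def wtF (a : ℕ) (mu : YoungDiagram) : ℕ →₀ ℕ :=
  Finsupp.onFinset (Finset.range a) (fun i => if i < a then mu.rowLen i else 0)
    (fun i h => Finset.mem_range.mpr (by
      by_contra hc
      exact h (by simp [hc])))

lemma wtF_apply {a b : ℕ} {mu : YoungDiagram} (hmu : mu ≤ rect a b) (i : ℕ) :
    (wtF a mu) i = mu.rowLen i := by
  show (if i < a then mu.rowLen i else 0) = mu.rowLen i
  split_ifs with h
  · rfl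
  · rw [rowLen_eq_zero_of_ge hmu (by omega)]

lemma innerSumEval {a b : ℕ} (ha : Odd a) (hb : Odd b)
    {lam mu : YoungDiagram} (hl : AlmostSelfCompl a b lam) (hm : AlmostSelfCompl a b mu)
    (hmax : Fval a b mu ≤ Fval a b lam)
    (m : ℕ →₀ ℕ) (hmval : ∀ i, (m i : ℕ) = lam.rowLen i + (rectCompl a b lam).rowLen i) :
    ∑ x ∈ Finset.HasAntidiagonal.antidiagonal m, schur mu x.1 * schur (rectCompl a b mu) x.2
      = if mu = lam ∨ mu = rectCompl a b lam then 1 else 0 := by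
  have hforce : ∀ x : (ℕ →₀ ℕ) × (ℕ →₀ ℕ), x ∈ Finset.HasAntidiagonal.antidiagonal m →
      schur mu x.1 ≠ 0 → schur (rectCompl a b mu) x.2 ≠ 0 →
      (∀ i, x.1 i = mu.rowLen i) ∧ (∀ i, x.2 i = (rectCompl a b mu).rowLen i) ∧
      (∀ i, mu.rowLen i + (rectCompl a b mu).rowLen i
          = lam.rowLen i + (rectCompl a b lam).rowLen i) := by
    rintro ⟨x1, x2⟩ hx h1 h2
    obtain ⟨T1, hT1⟩ := schur_exists_of_ne_zero h1
    obtain ⟨T2, hT2⟩ := schur_exists_of_ne_zero h2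
    rw [Finset.HasAntidiagonal.mem_antidiagonal] at hx
    refine key_forcing hl.1 hm.1 hmax x1 x2 ?_ T1 T2 hT1 hT2
    intro i
    rw [← hmval i, ← hx]
    rfl
  by_cases hcase : mu = lam ∨ mu = rectCompl a b lam
  · rw [if_pos hcase]
    have hmusum : ∀ i, mu.rowLen i + (rectCompl a b mu).rowLen i
        = lam.rowLen i + (rectCompl a b lam).rowLen i := by
      rcases hcase with rfl | rfl
      · intro i; rfl
      · intro i
        rw [rectCompl_rectCompl hl.1]
        omega
    have hmem : (wtF a mu, wtF a (rectCompl a b mu)) ∈ Finset.HasAntidiagonal.antidiagonal m := by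
      rw [Finset.HasAntidiagonal.mem_antidiagonal]
      ext i
      rw [Finsupp.add_apply, wtF_apply hm.1 i, wtF_apply (rectCompl_le (a := a) (b := b)) i,
        hmval i]
      exact hmusum i
    rw [Finset.sum_eq_single_of_mem _ hmem]
    · rw [schur_eq_one (fun k => wtF_apply hm.1 k),
        schur_eq_one (fun k => wtF_apply (rectCompl_le (a := a) (b := b)) k), mul_one]
    · rintro ⟨x1, x2⟩ hx hne
      by_contra h0
      have h1 : schur mu x1 ≠ 0 ∧ schur (rectCompl a b mu) x2 ≠ 0 := mul_ne_zero_iff.mp h0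
      obtain ⟨hf1, hf2, -⟩ := hforce _ hx h1.1 h1.2
      apply hne
      have e1 : x1 = wtF a mu :=
        Finsupp.ext fun i => (hf1 i).trans (wtF_apply hm.1 i).symm
      have e2 : x2 = wtF a (rectCompl a b mu) :=
        Finsupp.ext fun i => (hf2 i).trans (wtF_apply (rectCompl_le (a := a) (b := b)) i).symm
      rw [e1, e2]
  · rw [if_neg hcase]
    apply Finset.sum_eq_zero
    rintro ⟨x1, x2⟩ hx
    by_contra h0
    have h1 : schur mu x1 ≠ 0 ∧ schur (rectCompl a b mu) x2 ≠ 0 := mul_ne_zero_iff.mp h0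
    obtain ⟨-, -, h3⟩ := hforce _ hx h1.1 h1.2
    exact hcase (asc_unique ha hb hl hm h3)

end Aux6
/-- For `a`, `b` odd, the products `s_lam ⬝ s_{lamᶜ}` over (representatives
of) unordered almost-self-complementary pairs in the `a × b` rectangle are linearly
independent: any vanishing rational linear combination (encoded by a finitely supported
symmetric coefficient function `g` supported on almost-self-complementary partitions) has
all coefficients zero. -/
theorem statement3 (a b : ℕ) (ha : Odd a) (hb : Odd b) (ha0 : 0 < a) (hb0 : 0 < b)
    (g : YoungDiagram →₀ ℚ)
    (hsupp : ∀ μ ∈ g.support, AlmostSelfCompl a b μ)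
    (hsym : ∀ μ : YoungDiagram, AlmostSelfCompl a b μ → g (rectCompl a b μ) = g μ)
    (hzero : (g.sum fun μ q => q • (schur μ * schur (rectCompl a b μ))) = 0) :
    ∀ μ : YoungDiagram, g μ = 0 := by
  intro μ0
  by_contra hg0
  have hμ0 : μ0 ∈ g.support := Finsupp.mem_support_iff.mpr hg0
  obtain ⟨lam, hlam_mem, hlam_max⟩ := g.support.exists_max_image (Fval a b) ⟨μ0, hμ0⟩
  have hasc : AlmostSelfCompl a b lam := hsupp lam hlam_mem
  have hne : lam ≠ rectCompl a b lam := asc_ne hasc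
  set m : ℕ →₀ ℕ := wtF a lam + wtF a (rectCompl a b lam) with hm
  have hmval : ∀ i, (m i : ℕ) = lam.rowLen i + (rectCompl a b lam).rowLen i := by
    intro i
    rw [hm, Finsupp.add_apply, wtF_apply hasc.1 i, wtF_apply (rectCompl_le (a := a) (b := b)) i]
  have hco := congrArg (MvPowerSeries.coeff m) hzero
  rw [map_zero, Finsupp.sum, map_sum] at hco
  have hterm : ∀ μ ∈ g.support,
      (MvPowerSeries.coeff m) (g μ • (schur μ * schur (rectCompl a b μ)))
        = if μ = lam ∨ μ = rectCompl a b lam then g μ else 0 := by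
    intro μ hμ
    rw [LinearMap.map_smul, smul_eq_mul, MvPowerSeries.coeff_mul]
    have hsum := innerSumEval ha hb hasc (hsupp μ hμ) (hlam_max μ hμ) m hmval
    have hcoe : ∑ x ∈ Finset.HasAntidiagonal.antidiagonal m,
        MvPowerSeries.coeff x.1 (schur μ) * MvPowerSeries.coeff x.2
          (schur (rectCompl a b μ))
        = ∑ x ∈ Finset.HasAntidiagonal.antidiagonal m, schur μ x.1 * schur (rectCompl a b μ) x.2 := rfl
    rw [hcoe, hsum]
    split_ifs with h
    · rw [mul_one]
    · rw [mul_zero]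
  rw [Finset.sum_congr rfl hterm] at hco
  have hlc_mem : rectCompl a b lam ∈ g.support := by
    rw [Finsupp.mem_support_iff, hsym lam hasc]
    exact Finsupp.mem_support_iff.mp hlam_mem
  rw [← Finset.sum_filter] at hco
  have hfil : (g.support.filter fun μ => μ = lam ∨ μ = rectCompl a b lam)
      = {lam, rectCompl a b lam} := by
    ext μ
    rw [Finset.mem_filter, Finset.mem_insert, Finset.mem_singleton]
    constructor
    · exact fun h => h.2
    · rintro (rfl | rfl)
      exacts [⟨hlam_mem, Or.inl rfl⟩, ⟨hlc_mem, Or.inr rfl⟩]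
  rw [hfil, Finset.sum_pair hne, hsym lam hasc] at hco
  have hzero' : g lam = 0 := by linarith
  exact Finsupp.mem_support_iff.mp hlam_mem hzero'
end

section
/- Let b be a positive integer and R = (b, b) a 2×b rectangle. Then the products s_λ s_{λ^c}, where λ runs over one representative of each unordered pair {λ, λ^c} of partitions complementary in R, are linearly independent over ℚ in Λ. -/
open scoped Classical

/-! ### Auxiliary development -/

namespace S7

open Finset

lemma mem_rect {a b : ℕ} {c : ℕ × ℕ} : c ∈ rect a b ↔ c.1 < a ∧ c.2 < b := by
  rcases c with ⟨i, j⟩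
  rw [← YoungDiagram.mem_cells]
  simp [rect, YoungDiagram.mem_cells, YoungDiagram.mem_mk]

lemma mem_rectCompl {a b : ℕ} {μ : YoungDiagram} {c : ℕ × ℕ} :
    c ∈ rectCompl a b μ ↔ c.1 < a ∧ c.2 < b ∧ (a - 1 - c.1, b - 1 - c.2) ∉ μ := by
  rcases c with ⟨i, j⟩
  rw [← YoungDiagram.mem_cells]
  simp [rectCompl, YoungDiagram.mem_cells, YoungDiagram.mem_mk, mem_rect, and_assoc]

lemma rectCompl_le {a b : ℕ} {μ : YoungDiagram} : rectCompl a b μ ≤ rect a b := by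
  rw [← YoungDiagram.cells_subset_iff]
  exact Finset.filter_subset _ _

/-- Determine `rowLen` from a membership characterization. -/
lemma rowLen_eq {μ : YoungDiagram} {i n : ℕ} (h : ∀ j, (i, j) ∈ μ ↔ j < n) :
    μ.rowLen i = n := by
  have h1 := fun j => (YoungDiagram.mem_iff_lt_rowLen (μ := μ) (i := i) (j := j)).symm.trans (h j)
  rcases Nat.lt_trichotomy (μ.rowLen i) n with hlt | he | hgt
  · exact absurd ((h1 (μ.rowLen i)).mpr hlt) (by omega)
  · exact he
  · exact absurd ((h1 n).mp hgt) (by omega)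

/-- The two-row Young diagram with rows `p` and `min q p`. -/
def twoRow (p q : ℕ) : YoungDiagram :=
  ⟨(Finset.range 2 ×ˢ Finset.range p).filter fun c => c.1 = 0 ∨ c.2 < q, by
    rintro ⟨i, j⟩ ⟨i', j'⟩ ⟨hi, hj⟩ h
    simp only [Finset.coe_filter, Set.mem_setOf_eq, Finset.mem_product, Finset.mem_range] at h ⊢
    omega⟩

lemma mem_twoRow {p q : ℕ} {c : ℕ × ℕ} :
    c ∈ twoRow p q ↔ (c.1 = 0 ∧ c.2 < p) ∨ (c.1 = 1 ∧ c.2 < p ∧ c.2 < q) := by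
  rcases c with ⟨i, j⟩
  rw [← YoungDiagram.mem_cells]
  simp only [twoRow, YoungDiagram.mem_cells, YoungDiagram.mem_mk, Finset.mem_filter,
    Finset.mem_product, Finset.mem_range]
  omega

lemma twoRow_row_lt {p q : ℕ} {c : ℕ × ℕ} (h : c ∈ (twoRow p q).cells) : c.1 < 2 := by
  rw [YoungDiagram.mem_cells, mem_twoRow] at h
  omega

lemma rowLen0_twoRow {p q : ℕ} : (twoRow p q).rowLen 0 = p :=
  rowLen_eq fun j => by rw [mem_twoRow]; omega

lemma rowLen1_twoRow {p q : ℕ} (h : q ≤ p) : (twoRow p q).rowLen 1 = q :=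
  rowLen_eq fun j => by rw [mem_twoRow]; omega

lemma twoRow_le_rect {p q b : ℕ} (hp : p ≤ b) : twoRow p q ≤ rect 2 b := by
  rw [← YoungDiagram.cells_subset_iff]
  intro c hc
  rw [YoungDiagram.mem_cells, mem_twoRow] at hc
  rw [YoungDiagram.mem_cells, mem_rect]
  omega

lemma rowLen_le_of_le_rect {b : ℕ} {μ : YoungDiagram} (hμ : μ ≤ rect 2 b) (i : ℕ) :
    μ.rowLen i ≤ b := by
  by_contra h
  push_neg at h
  have : (i, b) ∈ μ := YoungDiagram.mem_iff_lt_rowLen.mpr h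
  have h2 := YoungDiagram.cells_subset_iff.mpr hμ ((YoungDiagram.mem_cells _).mpr this)
  rw [YoungDiagram.mem_cells, mem_rect] at h2
  omega

lemma row_lt_of_le_rect {b : ℕ} {μ : YoungDiagram} (hμ : μ ≤ rect 2 b) {c : ℕ × ℕ}
    (hc : c ∈ μ.cells) : c.1 < 2 := by
  have h2 := YoungDiagram.cells_subset_iff.mpr hμ hc
  rw [YoungDiagram.mem_cells, mem_rect] at h2
  exact h2.1

lemma eq_twoRow_of_le_rect {b : ℕ} {μ : YoungDiagram} (hμ : μ ≤ rect 2 b) :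
    μ = twoRow (μ.rowLen 0) (μ.rowLen 1) := by
  ext c
  rcases c with ⟨i, j⟩
  rw [YoungDiagram.mem_cells, YoungDiagram.mem_cells, mem_twoRow]
  constructor
  · intro h
    have hi : i < 2 := row_lt_of_le_rect hμ ((YoungDiagram.mem_cells _).mpr h)
    rw [YoungDiagram.mem_iff_lt_rowLen] at h
    interval_cases i
    · exact Or.inl ⟨rfl, h⟩
    · exact Or.inr ⟨rfl, lt_of_lt_of_le h (μ.rowLen_anti 0 1 (by omega)), h⟩
  · intro h
    rw [YoungDiagram.mem_iff_lt_rowLen]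
    rcases h with ⟨h0, h⟩ | ⟨h1, _, h⟩
    · subst h0; exact h
    · subst h1; exact h

lemma rowLen1_le_rowLen0 (μ : YoungDiagram) : μ.rowLen 1 ≤ μ.rowLen 0 :=
  μ.rowLen_anti 0 1 (by omega)

lemma rowLen0_rectCompl {b : ℕ} {μ : YoungDiagram} (hμ : μ ≤ rect 2 b) :
    (rectCompl 2 b μ).rowLen 0 = b - μ.rowLen 1 := by
  have hq := rowLen_le_of_le_rect hμ 1
  refine rowLen_eq fun j => ?_
  rw [mem_rectCompl]
  simp only [YoungDiagram.mem_iff_lt_rowLen]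
  norm_num
  omega

lemma rowLen1_rectCompl {b : ℕ} {μ : YoungDiagram} (hμ : μ ≤ rect 2 b) :
    (rectCompl 2 b μ).rowLen 1 = b - μ.rowLen 0 := by
  have hp := rowLen_le_of_le_rect hμ 0
  refine rowLen_eq fun j => ?_
  rw [mem_rectCompl]
  simp only [YoungDiagram.mem_iff_lt_rowLen]
  norm_num
  omega

lemma rectCompl_twoRow {b d q : ℕ} (h : q + d ≤ b) :
    rectCompl 2 b (twoRow (q + d) q) = twoRow (b - q) (b - q - d) := by
  ext c
  rcases c with ⟨i, j⟩
  rw [YoungDiagram.mem_cells, YoungDiagram.mem_cells, mem_rectCompl]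
  simp only [mem_twoRow]
  norm_num
  omega

lemma card_twoRow {p q : ℕ} (h : q ≤ p) : (twoRow p q).card = p + q := by
  have : (twoRow p q).cells = ({0} ×ˢ Finset.range p) ∪ ({1} ×ˢ Finset.range q) := by
    ext c
    rcases c with ⟨i, j⟩
    rw [YoungDiagram.mem_cells, mem_twoRow]
    simp only [Finset.mem_union, Finset.mem_product, Finset.mem_singleton, Finset.mem_range]
    omega
  rw [YoungDiagram.card, this, Finset.card_union_of_disjoint, Finset.card_product,
    Finset.card_product]
  · simp
  · simp only [Finset.disjoint_left, Finset.mem_product, Finset.mem_singleton, Finset.mem_range]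
    rintro ⟨i, j⟩ h1 h2
    omega

end S7

namespace S7

open Finset

/-- The exponent finsupp `x₀ᵘ x₁ᵛ x₂ʷ`. -/
noncomputable def mon (u v w : ℕ) : ℕ →₀ ℕ :=
  Finsupp.single 0 u + Finsupp.single 1 v + Finsupp.single 2 w

@[simp] lemma mon_apply_zero {u v w : ℕ} : mon u v w 0 = u := by
  simp [mon, Finsupp.single_apply]

@[simp] lemma mon_apply_one {u v w : ℕ} : mon u v w 1 = v := by
  simp [mon, Finsupp.single_apply]

@[simp] lemma mon_apply_two {u v w : ℕ} : mon u v w 2 = w := by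
  simp [mon, Finsupp.single_apply]

lemma mon_apply_ge {u v w k : ℕ} (hk : 3 ≤ k) : mon u v w k = 0 := by
  simp only [mon, Finsupp.add_apply, Finsupp.single_apply]
  rw [if_neg (by omega), if_neg (by omega), if_neg (by omega)]
  simp

lemma mon_add {u v w u' v' w' : ℕ} :
    mon u v w + mon u' v' w' = mon (u + u') (v + v') (w + w') := by
  ext k
  rcases Nat.lt_or_ge k 3 with hk | hk
  · interval_cases k <;> simp
  · simp [mon_apply_ge hk, Finsupp.add_apply]

lemma eq_mon_of_apply_ge {x : ℕ →₀ ℕ} (h : ∀ k, 3 ≤ k → x k = 0) :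
    x = mon (x 0) (x 1) (x 2) := by
  ext k
  rcases Nat.lt_or_ge k 3 with hk | hk
  · interval_cases k <;> simp
  · rw [h k hk, mon_apply_ge hk]

/-- The coefficient of `schur μ` is the number of SSYT with the given content. -/
lemma coeff_schur (μ : YoungDiagram) (m : ℕ →₀ ℕ) :
    MvPowerSeries.coeff m (schur μ) =
      (Set.ncard {T : SemistandardYoungTableau μ |
        ∀ k : ℕ, (μ.cells.filter fun c => T c.1 c.2 = k).card = m k} : ℚ) :=
  rfl

/-- Entries of a tableau with content `m` are `< 3` if `m` vanishes from `3` on. -/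
lemma entry_lt_three {μ : YoungDiagram} {T : SemistandardYoungTableau μ} {m : ℕ →₀ ℕ}
    (hT : ∀ k : ℕ, (μ.cells.filter fun c => T c.1 c.2 = k).card = m k)
    (h3 : ∀ k, 3 ≤ k → m k = 0) :
    ∀ c ∈ μ.cells, T c.1 c.2 < 3 := by
  intro c hc
  by_contra h
  push_neg at h
  have h0 := hT (T c.1 c.2)
  rw [h3 _ h, Finset.card_eq_zero] at h0
  have : c ∈ μ.cells.filter fun c' => T c'.1 c'.2 = T c.1 c.2 :=
    Finset.mem_filter.mpr ⟨hc, rfl⟩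
  rw [h0] at this
  exact absurd this (Finset.notMem_empty _)

/-- The total content of a tableau equals the number of cells. -/
lemma sum_content {μ : YoungDiagram} {T : SemistandardYoungTableau μ} {m : ℕ →₀ ℕ}
    (hT : ∀ k : ℕ, (μ.cells.filter fun c => T c.1 c.2 = k).card = m k)
    (h3 : ∀ k, 3 ≤ k → m k = 0) :
    m 0 + m 1 + m 2 = μ.card := by
  have hlt := entry_lt_three hT h3
  have key : μ.cells.card = ∑ k ∈ Finset.range 3, (μ.cells.filter fun c => T c.1 c.2 = k).card :=
    Finset.card_eq_sum_card_fiberwise fun c hc => Finset.mem_range.mpr (hlt c hc)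
  rw [YoungDiagram.card, key]
  simp only [hT]
  rw [Finset.sum_range_succ, Finset.sum_range_succ, Finset.sum_range_one]

/-- L1: the coefficient vanishes if the total degree is wrong. -/
lemma coeff_schur_eq_zero_of_sum_ne {μ : YoungDiagram} {m : ℕ →₀ ℕ}
    (h3 : ∀ k, 3 ≤ k → m k = 0) (hne : m 0 + m 1 + m 2 ≠ μ.card) :
    MvPowerSeries.coeff m (schur μ) = 0 := by
  rw [coeff_schur]
  norm_cast
  rw [Set.ncard_eq_zero ?fin]
  case fin =>
    apply Set.Finite.subset (Set.finite_empty)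
    intro T hT
    exact absurd (sum_content hT h3) hne
  ext T
  simp only [Set.mem_setOf_eq, Set.mem_empty_iff_false, iff_false]
  intro hT
  exact hne (sum_content hT h3)

/-- Cells with entry `0` lie in row `0`. -/
lemma zero_entries_subset_row {μ : YoungDiagram} (T : SemistandardYoungTableau μ) :
    (μ.cells.filter fun c => T c.1 c.2 = 0) ⊆ μ.row 0 := by
  intro c hc
  obtain ⟨hc, h0⟩ := Finset.mem_filter.mp hc
  rw [YoungDiagram.mem_row_iff]
  refine ⟨(YoungDiagram.mem_cells _).mp hc, ?_⟩
  by_contra h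
  have : T 0 c.2 < T c.1 c.2 := T.col_strict (by omega) (by
    rw [← Prod.mk.eta (p := c)] at hc
    exact (YoungDiagram.mem_cells _).mp hc)
  omega

/-- L2: the coefficient vanishes if `m 0` exceeds the first row length. -/
lemma coeff_schur_eq_zero_of_gt {μ : YoungDiagram} {m : ℕ →₀ ℕ}
    (h0 : μ.rowLen 0 < m 0) :
    MvPowerSeries.coeff m (schur μ) = 0 := by
  rw [coeff_schur]
  norm_cast
  have hempty : {T : SemistandardYoungTableau μ |
      ∀ k : ℕ, (μ.cells.filter fun c => T c.1 c.2 = k).card = m k} = ∅ := by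
    ext T
    simp only [Set.mem_setOf_eq, Set.mem_empty_iff_false, iff_false]
    intro hT
    have hle := Finset.card_le_card (zero_entries_subset_row T)
    rw [hT 0, ← YoungDiagram.rowLen_eq_card] at hle
    omega
  rw [hempty]
  simp

end S7

namespace S7

open Finset

/-- The unique SSYT of a two-row shape with full first row of `0`s and
second row `1…1 2…2` with `n` ones. -/
noncomputable def rowTab (μ : YoungDiagram) (h2 : ∀ c ∈ μ.cells, c.1 < 2) (n : ℕ) :
    SemistandardYoungTableau μ where
  entry i j := if (i, j) ∈ μ then (if i = 0 then 0 else if j < n then 1 else 2) else 0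
  row_weak' {i j1 j2} hj hc := by
    rw [if_pos hc, if_pos (μ.up_left_mem (le_refl i) (le_of_lt hj) hc)]
    split_ifs <;> omega
  col_strict' {i1 i2 j} hi hc := by
    have hi2 : i2 < 2 := h2 (i2, j) ((YoungDiagram.mem_cells _).mpr hc)
    have hi1 : i1 = 0 := by omega
    have h22 : i2 = 1 := by omega
    rw [if_pos hc, if_pos (μ.up_left_mem (by omega) (le_refl j) hc), if_pos hi1,
      if_neg (by omega)]
    split_ifs <;> omega
  zeros' {i j} hc := if_neg hc

lemma rowTab_apply {μ : YoungDiagram} (h2 : ∀ c ∈ μ.cells, c.1 < 2) (n : ℕ) (i j : ℕ) :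
    rowTab μ h2 n i j = if (i, j) ∈ μ then (if i = 0 then 0 else if j < n then 1 else 2) else 0 :=
  rfl

/-- `rowTab` has the prescribed content. -/
lemma rowTab_content {μ : YoungDiagram} (h2 : ∀ c ∈ μ.cells, c.1 < 2) {m : ℕ →₀ ℕ}
    (hm0 : m 0 = μ.rowLen 0) (hm12 : m 1 + m 2 = μ.rowLen 1) (h3 : ∀ k, 3 ≤ k → m k = 0) :
    ∀ k : ℕ, (μ.cells.filter fun c => (rowTab μ h2 (m 1)) c.1 c.2 = k).card = m k := by
  intro k
  have hm1q : m 1 ≤ μ.rowLen 1 := by omega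
  rcases Nat.lt_or_ge k 3 with hk | hk
  · interval_cases k
    · -- k = 0 : the filter is row 0
      have : (μ.cells.filter fun c => (rowTab μ h2 (m 1)) c.1 c.2 = 0) = μ.row 0 := by
        ext ⟨i, j⟩
        simp only [Finset.mem_filter, YoungDiagram.mem_cells, YoungDiagram.mem_row_iff]
        simp only [rowTab_apply]
        constructor
        · rintro ⟨hm, he⟩
          rw [if_pos hm] at he
          refine ⟨hm, ?_⟩
          split_ifs at he <;> omega
        · rintro ⟨hm, hi⟩
          refine ⟨hm, ?_⟩
          rw [if_pos hm, if_pos hi]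
      rw [this, ← YoungDiagram.rowLen_eq_card, hm0]
    · -- k = 1
      have : (μ.cells.filter fun c => (rowTab μ h2 (m 1)) c.1 c.2 = 1)
          = {1} ×ˢ Finset.range (m 1) := by
        ext ⟨i, j⟩
        simp only [Finset.mem_filter, YoungDiagram.mem_cells, Finset.mem_product,
          Finset.mem_singleton, Finset.mem_range]
        simp only [rowTab_apply]
        constructor
        · rintro ⟨hm, he⟩
          rw [if_pos hm] at he
          have hi2 : i < 2 := h2 (i, j) ((YoungDiagram.mem_cells _).mpr hm)
          split_ifs at he <;> omega
        · rintro ⟨hi, hj⟩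
          have hm : (i, j) ∈ μ := by
            rw [hi, YoungDiagram.mem_iff_lt_rowLen]
            omega
          rw [if_pos hm, if_neg (by omega), if_pos hj]
          exact ⟨hm, rfl⟩
      rw [this]
      simp
    · -- k = 2
      have : (μ.cells.filter fun c => (rowTab μ h2 (m 1)) c.1 c.2 = 2)
          = {1} ×ˢ Finset.Ico (m 1) (μ.rowLen 1) := by
        ext ⟨i, j⟩
        simp only [Finset.mem_filter, YoungDiagram.mem_cells, Finset.mem_product,
          Finset.mem_singleton, Finset.mem_Ico]
        simp only [rowTab_apply]
        constructor
        · rintro ⟨hm, he⟩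
          rw [if_pos hm] at he
          have hi2 : i < 2 := h2 (i, j) ((YoungDiagram.mem_cells _).mpr hm)
          have hi1 : i = 1 := by split_ifs at he <;> omega
          subst hi1
          rw [YoungDiagram.mem_iff_lt_rowLen] at hm
          split_ifs at he <;> omega
        · rintro ⟨hi, hj1, hj2⟩
          have hm : (i, j) ∈ μ := by
            rw [hi, YoungDiagram.mem_iff_lt_rowLen]
            omega
          rw [if_pos hm, if_neg (by omega), if_neg (by omega)]
          exact ⟨hm, rfl⟩
      rw [this]
      simp only [Finset.card_product, Finset.card_singleton, Nat.card_Ico, one_mul]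
      omega
  · -- k ≥ 3 : empty
    have : (μ.cells.filter fun c => (rowTab μ h2 (m 1)) c.1 c.2 = k) = ∅ := by
      ext ⟨i, j⟩
      simp only [Finset.mem_filter, YoungDiagram.mem_cells, Finset.notMem_empty, iff_false,
        not_and]
      simp only [rowTab_apply]
      intro hm
      rw [if_pos hm]
      split_ifs <;> omega
    rw [this, h3 k hk, Finset.card_empty]

/-- Any SSYT with the prescribed content equals `rowTab`. -/
lemma eq_rowTab {μ : YoungDiagram} (h2 : ∀ c ∈ μ.cells, c.1 < 2) {m : ℕ →₀ ℕ}
    (hm0 : m 0 = μ.rowLen 0) (hm12 : m 1 + m 2 = μ.rowLen 1) (h3 : ∀ k, 3 ≤ k → m k = 0)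
    (T : SemistandardYoungTableau μ)
    (hT : ∀ k : ℕ, (μ.cells.filter fun c => T c.1 c.2 = k).card = m k) :
    T = rowTab μ h2 (m 1) := by
  have hlt3 := entry_lt_three hT h3
  -- row 0 is all zeros
  have hrow0 : ∀ j, (0, j) ∈ μ → T 0 j = 0 := by
    have hsub := zero_entries_subset_row T
    have hcard : (μ.row 0).card ≤ (μ.cells.filter fun c => T c.1 c.2 = 0).card := by
      rw [hT 0, ← YoungDiagram.rowLen_eq_card, hm0]
    have heq := Finset.eq_of_subset_of_card_le hsub hcard
    intro j hj
    have : (0, j) ∈ μ.cells.filter fun c => T c.1 c.2 = 0 := by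
      rw [heq, YoungDiagram.mem_row_iff]
      exact ⟨hj, rfl⟩
    exact (Finset.mem_filter.mp this).2
  -- row 1 entries are 1 or 2
  have hrow1 : ∀ j, (1, j) ∈ μ → 1 ≤ T 1 j ∧ T 1 j < 3 := by
    intro j hj
    constructor
    · have := T.col_strict (i1 := 0) (by omega) hj
      omega
    · exact hlt3 (1, j) ((YoungDiagram.mem_cells _).mpr hj)
  -- the set of `1`-entries in row 1 is an initial segment of length `m 1`
  set S : Finset ℕ := (Finset.range (μ.rowLen 1)).filter fun j => T 1 j = 1 with hSdef
  have hf1 : (μ.cells.filter fun c => T c.1 c.2 = 1) = {1} ×ˢ S := by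
    ext ⟨i, j⟩
    simp only [Finset.mem_filter, YoungDiagram.mem_cells, Finset.mem_product,
      Finset.mem_singleton, Finset.mem_range, hSdef]
    constructor
    · rintro ⟨hm, he⟩
      have hi2 : i < 2 := h2 (i, j) ((YoungDiagram.mem_cells _).mpr hm)
      have hi1 : i = 1 := by
        rcases Nat.lt_or_ge i 1 with h | h
        · have : i = 0 := by omega
          subst this
          rw [hrow0 j hm] at he
          omega
        · omega
      subst hi1
      rw [YoungDiagram.mem_iff_lt_rowLen] at hm
      exact ⟨rfl, hm, he⟩
    · rintro ⟨hi, hj, he⟩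
      subst hi
      rw [YoungDiagram.mem_iff_lt_rowLen]
      exact ⟨hj, he⟩
  have hcardS : S.card = m 1 := by
    have := hT 1
    rw [hf1] at this
    simpa using this
  have hdc : ∀ j j', j' ≤ j → j ∈ S → j' ∈ S := by
    intro j j' hle hj
    simp only [hSdef, Finset.mem_filter, Finset.mem_range] at hj ⊢
    have hmem : (1, j) ∈ μ := YoungDiagram.mem_iff_lt_rowLen.mpr hj.1
    have hmem' : (1, j') ∈ μ := YoungDiagram.mem_iff_lt_rowLen.mpr (by omega)
    have h1 := T.row_weak_of_le hle hmem
    have h2' := (hrow1 j' hmem').1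
    refine ⟨by omega, by omega⟩
  have hS : ∀ j, j ∈ S ↔ j < m 1 := by
    intro j
    constructor
    · intro hj
      have hsub : Finset.range (j + 1) ⊆ S := by
        intro k hk
        rw [Finset.mem_range] at hk
        exact hdc j k (by omega) hj
      have := Finset.card_le_card hsub
      rw [Finset.card_range, hcardS] at this
      omega
    · intro hj
      by_contra hjS
      have hsub : S ⊆ Finset.range j := by
        intro s hs
        rw [Finset.mem_range]
        by_contra hns
        exact hjS (hdc s j (by omega) hs)
      have := Finset.card_le_card hsub
      rw [Finset.card_range, hcardS] at this
      omega
  -- conclude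
  ext i j
  rw [rowTab_apply]
  by_cases hm : (i, j) ∈ μ
  · rw [if_pos hm]
    have hi2 : i < 2 := h2 (i, j) ((YoungDiagram.mem_cells _).mpr hm)
    rcases Nat.lt_or_ge i 1 with h | h
    · have : i = 0 := by omega
      subst this
      rw [if_pos rfl]
      exact hrow0 j hm
    · have hi1 : i = 1 := by omega
      subst hi1
      rw [if_neg (by omega)]
      have hjq : j < μ.rowLen 1 := YoungDiagram.mem_iff_lt_rowLen.mp hm
      by_cases hj : j < m 1
      · rw [if_pos hj]
        have : j ∈ S := (hS j).mpr hj
        simpa [hSdef] using (Finset.mem_filter.mp this).2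
      · rw [if_neg hj]
        have hjS : j ∉ S := fun h => hj ((hS j).mp h)
        have hne : T 1 j ≠ 1 := by
          intro he
          exact hjS (by simp [hSdef, Finset.mem_filter, Finset.mem_range, hjq, he])
        have := hrow1 j hm
        omega
  · rw [if_neg hm, T.zeros hm]

/-- L3: singleton coefficient. -/
lemma coeff_schur_eq_one {μ : YoungDiagram} (h2 : ∀ c ∈ μ.cells, c.1 < 2) {m : ℕ →₀ ℕ}
    (hm0 : m 0 = μ.rowLen 0) (hm12 : m 1 + m 2 = μ.rowLen 1) (h3 : ∀ k, 3 ≤ k → m k = 0) :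
    MvPowerSeries.coeff m (schur μ) = 1 := by
  rw [coeff_schur]
  have hset : {T : SemistandardYoungTableau μ |
      ∀ k : ℕ, (μ.cells.filter fun c => T c.1 c.2 = k).card = m k} = {rowTab μ h2 (m 1)} := by
    apply Set.eq_singleton_iff_unique_mem.mpr
    constructor
    · exact rowTab_content h2 hm0 hm12 h3
    · intro T hT
      exact eq_rowTab h2 hm0 hm12 h3 T hT
  rw [hset, Set.ncard_singleton]
  norm_num

end S7

namespace S7

open Finset

lemma coeff_prod_eq_zero {b d v w : ℕ} {μ : YoungDiagram} (hμ : μ ≤ rect 2 b)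
    (hlt : μ.rowLen 0 < μ.rowLen 1 + d) :
    MvPowerSeries.coeff (mon (b + d) v w) (schur μ * schur (rectCompl 2 b μ)) = 0 := by
  classical
  rw [MvPowerSeries.coeff_mul]
  apply Finset.sum_eq_zero
  rintro ⟨x, y⟩ hxy
  rw [Finset.HasAntidiagonal.mem_antidiagonal] at hxy
  have e0 : x 0 + y 0 = b + d := by
    have := DFunLike.congr_fun hxy 0
    rwa [Finsupp.add_apply, mon_apply_zero] at this
  have hq := rowLen_le_of_le_rect hμ 1
  have hp := rowLen_le_of_le_rect hμ 0
  rcases Nat.lt_or_ge (μ.rowLen 0) (x 0) with hgt | hle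
  · rw [coeff_schur_eq_zero_of_gt hgt, zero_mul]
  · have : (rectCompl 2 b μ).rowLen 0 < y 0 := by
      rw [rowLen0_rectCompl hμ]
      omega
    rw [coeff_schur_eq_zero_of_gt this, mul_zero]

lemma coeff_prod_twoRow {b d q q' : ℕ} (hq : q + d ≤ b) (hq' : q' ≤ b - d) :
    MvPowerSeries.coeff (mon (b + d) (b - d - q') q')
      (schur (twoRow (q + d) q) * schur (rectCompl 2 b (twoRow (q + d) q)))
    = ((min (min q (b - d - q)) (min q' (b - d - q')) + 1 : ℕ) : ℚ) := by
  classical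
  set μ := twoRow (q + d) q with hμdef
  have hcompl : rectCompl 2 b μ = twoRow (b - q) (b - q - d) := rectCompl_twoRow hq
  have h2μ : ∀ c ∈ μ.cells, c.1 < 2 := fun c hc => twoRow_row_lt hc
  have h2c : ∀ c ∈ (rectCompl 2 b μ).cells, c.1 < 2 := by
    rw [hcompl]; exact fun c hc => twoRow_row_lt hc
  have hr0 : μ.rowLen 0 = q + d := rowLen0_twoRow
  have hr1 : μ.rowLen 1 = q := rowLen1_twoRow (by omega)
  have hr0c : (rectCompl 2 b μ).rowLen 0 = b - q := by
    rw [hcompl]; exact rowLen0_twoRow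
  have hr1c : (rectCompl 2 b μ).rowLen 1 = b - q - d := by
    rw [hcompl]; exact rowLen1_twoRow (by omega)
  have hcard : μ.card = (q + d) + q := card_twoRow (by omega)
  rw [MvPowerSeries.coeff_mul]
  have hterm : ∀ x ∈ Finset.HasAntidiagonal.antidiagonal (mon (b + d) (b - d - q') q'),
      MvPowerSeries.coeff x.1 (schur μ) * MvPowerSeries.coeff x.2 (schur (rectCompl 2 b μ))
      = if x.1 0 = q + d ∧ x.1 1 + x.1 2 = q then 1 else 0 := by
    rintro ⟨x, y⟩ hxy
    rw [Finset.HasAntidiagonal.mem_antidiagonal] at hxy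
    dsimp only at hxy ⊢
    have e0 : x 0 + y 0 = b + d := by
      have := DFunLike.congr_fun hxy 0
      rwa [Finsupp.add_apply, mon_apply_zero] at this
    have e1 : x 1 + y 1 = b - d - q' := by
      have := DFunLike.congr_fun hxy 1
      rwa [Finsupp.add_apply, mon_apply_one] at this
    have e2 : x 2 + y 2 = q' := by
      have := DFunLike.congr_fun hxy 2
      rwa [Finsupp.add_apply, mon_apply_two] at this
    have e3 : ∀ k, 3 ≤ k → x k = 0 ∧ y k = 0 := by
      intro k hk
      have := DFunLike.congr_fun hxy k
      rw [Finsupp.add_apply, mon_apply_ge hk] at this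
      omega
    by_cases hP : x 0 = q + d ∧ x 1 + x 2 = q
    · rw [if_pos hP]
      have f1 : MvPowerSeries.coeff x (schur μ) = 1 :=
        coeff_schur_eq_one h2μ (by rw [hr0]; exact hP.1) (by rw [hr1]; exact hP.2)
          (fun k hk => (e3 k hk).1)
      have f2 : MvPowerSeries.coeff y (schur (rectCompl 2 b μ)) = 1 :=
        coeff_schur_eq_one h2c (by rw [hr0c]; omega) (by rw [hr1c]; omega)
          (fun k hk => (e3 k hk).2)
      rw [f1, f2, mul_one]
    · rw [if_neg hP]
      by_cases h0 : x 0 = q + d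
      · have hne : x 1 + x 2 ≠ q := fun h => hP ⟨h0, h⟩
        have hgoal : x 0 + x 1 + x 2 ≠ μ.card := by rw [hcard]; omega
        rw [coeff_schur_eq_zero_of_sum_ne (fun k hk => (e3 k hk).1) hgoal, zero_mul]
      · rcases Nat.lt_or_ge (q + d) (x 0) with hgt | hle
        · rw [coeff_schur_eq_zero_of_gt (by rw [hr0]; exact hgt), zero_mul]
        · have : (rectCompl 2 b μ).rowLen 0 < y 0 := by rw [hr0c]; omega
          rw [coeff_schur_eq_zero_of_gt this, mul_zero]
  rw [Finset.sum_congr rfl hterm, Finset.sum_boole]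
  have hbij : ((Finset.HasAntidiagonal.antidiagonal (mon (b + d) (b - d - q') q')).filter
        fun x => x.1 0 = q + d ∧ x.1 1 + x.1 2 = q).card
      = (Finset.Icc (q - q') (min q (b - d - q'))).card := by
    apply Finset.card_bij (i := fun x _ => x.1 1)
    · rintro ⟨x, y⟩ hx
      obtain ⟨hxy, hP⟩ := Finset.mem_filter.mp hx
      rw [Finset.HasAntidiagonal.mem_antidiagonal] at hxy
      dsimp only at hxy hP ⊢
      have e1 : x 1 + y 1 = b - d - q' := by
        have := DFunLike.congr_fun hxy 1
        rwa [Finsupp.add_apply, mon_apply_one] at this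
      have e2 : x 2 + y 2 = q' := by
        have := DFunLike.congr_fun hxy 2
        rwa [Finsupp.add_apply, mon_apply_two] at this
      rw [Finset.mem_Icc]
      constructor
      · omega
      · rw [le_min_iff]
        omega
    · rintro ⟨x, y⟩ hx ⟨x', y'⟩ hx' heq
      obtain ⟨hxy, hP⟩ := Finset.mem_filter.mp hx
      obtain ⟨hxy', hP'⟩ := Finset.mem_filter.mp hx'
      rw [Finset.HasAntidiagonal.mem_antidiagonal] at hxy hxy'
      dsimp only at hxy hP hxy' hP' heq
      have hx1 : x = x' := by
        ext k
        rcases Nat.lt_or_ge k 3 with hk | hk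
        · interval_cases k
          · rw [hP.1, hP'.1]
          · exact heq
          · have h1 := hP.1
            have h2 := hP.2
            have h1' := hP'.1
            have h2' := hP'.2
            omega
        · have ex := DFunLike.congr_fun hxy k
          have ex' := DFunLike.congr_fun hxy' k
          rw [Finsupp.add_apply, mon_apply_ge hk] at ex ex'
          omega
      have hy1 : y = y' := by
        have : x + y = x' + y' := by rw [hxy, hxy']
        rw [hx1] at this
        exact add_left_cancel this
      rw [Prod.mk.injEq]
      exact ⟨hx1, hy1⟩
    · intro a ha
      rw [Finset.mem_Icc, le_min_iff] at ha
      refine ⟨(mon (q + d) a (q - a), mon (b - q) (b - d - q' - a) (q' - (q - a))), ?_, ?_⟩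
      · rw [Finset.mem_filter, Finset.HasAntidiagonal.mem_antidiagonal]
        constructor
        · rw [mon_add]
          have h1 : q + d + (b - q) = b + d := by omega
          have h2 : a + (b - d - q' - a) = b - d - q' := by omega
          have h3 : q - a + (q' - (q - a)) = q' := by omega
          rw [h1, h2, h3]
        · constructor
          · simp
          · simp only [mon_apply_one, mon_apply_two]
            omega
      · simp
  rw [hbij, Nat.card_Icc]
  norm_cast
  omega

end S7

namespace S7

open Finset

/-- Inverting the `min`-matrix against a symmetric vector. -/
lemma inversion (e : ℕ) (h : ℕ → ℚ)
    (hsymm : ∀ t, t ≤ e → h (e - t) = h t)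
    (hrel : ∀ q', q' ≤ e → ∑ t ∈ Finset.range (e + 1),
      h t * ((min (min t (e - t)) (min q' (e - q')) + 1 : ℕ) : ℚ) = 0) :
    ∀ t, t ≤ e → h t = 0 := by
  set F : ℕ → ℚ := fun s => ∑ t ∈ Finset.range (e + 1),
    h t * ((min (min t (e - t)) s + 1 : ℕ) : ℚ) with hFdef
  set S : ℕ → ℚ := fun s => ∑ t ∈ Finset.range (e + 1),
    h t * (if s ≤ min t (e - t) then (1 : ℚ) else 0) with hSdef
  have hF : ∀ s, 2 * s ≤ e → F s = 0 := by
    intro s hs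
    have h1 := hrel s (by omega)
    rw [show min s (e - s) = s by omega] at h1
    exact h1
  have hS0 : S 0 = F 0 := by
    apply Finset.sum_congr rfl
    intro t _
    rw [Nat.min_zero]
    norm_num
  have hSstep : ∀ s, S (s + 1) = F (s + 1) - F s := by
    intro s
    rw [hSdef, hFdef]
    rw [← Finset.sum_sub_distrib]
    apply Finset.sum_congr rfl
    intro t _
    rw [← mul_sub]
    congr 1
    rcases le_or_gt (s + 1) (min t (e - t)) with hle | hlt
    · rw [if_pos hle, show min (min t (e - t)) (s + 1) = s + 1 by omega,
        show min (min t (e - t)) s = s by omega]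
      push_cast
      ring
    · rw [if_neg (by omega), show min (min t (e - t)) (s + 1) = min t (e - t) by omega,
        show min (min t (e - t)) s = min t (e - t) by omega]
      ring
  have hShigh : ∀ s, e < 2 * s → S s = 0 := by
    intro s hs
    apply Finset.sum_eq_zero
    intro t ht
    rw [Finset.mem_range] at ht
    rw [if_neg (by omega), mul_zero]
  have hSall : ∀ s, S s = 0 := by
    intro s
    rcases le_or_gt (2 * s) e with hle | hgt
    · rcases s with _ | s'
      · rw [hS0, hF 0 (by omega)]
      · rw [hSstep s', hF (s' + 1) (by omega), hF s' (by omega), sub_zero]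
    · exact hShigh s hgt
  have hfiber : ∀ s, 2 * s ≤ e → h s + h (e - s) = 0 ∨ (s = e - s ∧ h s = 0) := by
    intro s hs
    have hdiff : S s - S (s + 1) = ∑ t ∈ Finset.range (e + 1),
        (if min t (e - t) = s then h t else 0) := by
      rw [hSdef, ← Finset.sum_sub_distrib]
      apply Finset.sum_congr rfl
      intro t _
      rw [← mul_sub]
      rcases Nat.lt_trichotomy (min t (e - t)) s with hlt | heq | hgt
      · rw [if_neg (by omega), if_neg (by omega), if_neg (by omega)]
        ring
      · rw [if_pos (by omega), if_neg (by omega), if_pos heq]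
        ring
      · rw [if_pos (by omega), if_pos (by omega), if_neg (by omega)]
        ring
    rw [hSall s, hSall (s + 1), sub_zero, ← Finset.sum_filter] at hdiff
    by_cases hcase : s = e - s
    · have hset : (Finset.range (e + 1)).filter (fun t => min t (e - t) = s) = {s} := by
        ext t
        simp only [Finset.mem_filter, Finset.mem_range, Finset.mem_singleton]
        omega
      rw [hset, Finset.sum_singleton] at hdiff
      exact Or.inr ⟨hcase, hdiff.symm⟩
    · have hset : (Finset.range (e + 1)).filter (fun t => min t (e - t) = s) = {s, e - s} := by
        ext t
        simp only [Finset.mem_filter, Finset.mem_range, Finset.mem_insert, Finset.mem_singleton]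
        omega
      rw [hset, Finset.sum_pair hcase] at hdiff
      exact Or.inl hdiff.symm
  have hmain : ∀ s, 2 * s ≤ e → h s = 0 := by
    intro s hs
    rcases hfiber s hs with hc | ⟨_, hc⟩
    · rw [hsymm s (by omega)] at hc
      linarith
    · exact hc
  intro t ht
  rcases le_or_gt (2 * t) e with hle | hgt
  · exact hmain t hle
  · rw [← hsymm t ht]
    exact hmain (e - t) (by omega)

end S7

/-- For the `2 × b` rectangle, the products `s_lam ⬝ s_{lamᶜ}` over
(representatives of) unordered complementary pairs `{lam, lamᶜ}` are linearly independent: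
any vanishing rational linear combination (encoded by a finitely supported symmetric
coefficient function `g` supported on subdiagrams of the rectangle) has all coefficients
zero. -/
theorem statement7 (b : ℕ) (hb : 0 < b) (g : YoungDiagram →₀ ℚ)
    (hsupp : ∀ μ ∈ g.support, μ ≤ rect 2 b)
    (hsym : ∀ μ : YoungDiagram, μ ≤ rect 2 b → g (rectCompl 2 b μ) = g μ)
    (hzero : (g.sum fun μ q => q • (schur μ * schur (rectCompl 2 b μ))) = 0) :
    ∀ μ : YoungDiagram, μ ≤ rect 2 b → g μ = 0 := by
  classical
  -- coefficient extraction
  have hcoeff : ∀ mm : ℕ →₀ ℕ,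
      ∑ μ ∈ g.support, g μ * MvPowerSeries.coeff mm
        (schur μ * schur (rectCompl 2 b μ)) = 0 := by
    intro mm
    have h1 : MvPowerSeries.coeff mm
        (g.sum fun μ c => c • (schur μ * schur (rectCompl 2 b μ)))
        = ∑ μ ∈ g.support, g μ * MvPowerSeries.coeff mm
            (schur μ * schur (rectCompl 2 b μ)) := by
      rw [map_finsuppSum]
      apply Finset.sum_congr rfl
      intro μ _
      dsimp only
      rw [LinearMap.map_smul, smul_eq_mul]
    rw [hzero, map_zero] at h1
    exact h1.symm
  suffices H : ∀ k : ℕ, ∀ μ ∈ g.support, b < (μ.rowLen 0 - μ.rowLen 1) + k → False by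
    intro μ hμ
    by_contra hg
    exact H (b + 1) μ (Finsupp.mem_support_iff.mpr hg) (by omega)
  intro k
  induction k with
  | zero =>
    intro μ hμ hlt
    have h0 := S7.rowLen_le_of_le_rect (hsupp μ hμ) 0
    omega
  | succ k ih =>
    intro μ0 hμ0 hlt0
    -- from the inductive hypothesis, every support element has `rowLen 0 - rowLen 1 ≤ b - k`
    have hbound : ∀ μ ∈ g.support, μ.rowLen 0 - μ.rowLen 1 + k ≤ b := by
      intro μ hμ
      by_contra hc
      exact ih μ hμ (by omega)
    have hk : k ≤ b := by
      have := hbound μ0 hμ0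
      omega
    set d : ℕ := b - k with hd
    have hd0 : μ0.rowLen 0 - μ0.rowLen 1 = d := by
      have := hbound μ0 hμ0
      omega
    -- the key family of linear relations
    have hrel : ∀ q', q' ≤ b - d → ∑ t ∈ Finset.range (b - d + 1),
        g (S7.twoRow (t + d) t) *
          ((min (min t (b - d - t)) (min q' (b - d - q')) + 1 : ℕ) : ℚ) = 0 := by
      intro q' hq'
      have h2 := hcoeff (S7.mon (b + d) (b - d - q') q')
      -- restrict the sum to support elements with difference exactly d
      rw [← Finset.sum_filter_of_ne (p := fun μ => μ.rowLen 0 = μ.rowLen 1 + d)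
        (by
          intro μ hμ hne
          by_contra hc
          have hlt : μ.rowLen 0 < μ.rowLen 1 + d := by
            have hb1 := hbound μ hμ
            have hb2 := S7.rowLen1_le_rowLen0 μ
            omega
          rw [S7.coeff_prod_eq_zero (hsupp μ hμ) hlt, mul_zero] at hne
          exact hne rfl)] at h2
      rw [← h2]
      symm
      -- reindex by the second row length
      rw [← Finset.sum_filter_of_ne (p := fun t => S7.twoRow (t + d) t ∈ g.support)
        (by
          intro t _ hne
          by_contra hc
          rw [Finsupp.notMem_support_iff.mp hc, zero_mul] at hne
          exact hne rfl)]
      refine Finset.sum_nbij' (i := fun μ => μ.rowLen 1) (j := fun t => S7.twoRow (t + d) t)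
        ?_ ?_ ?_ ?_ ?_
      · intro μ hμ
        rw [Finset.mem_filter] at hμ ⊢
        obtain ⟨hμs, hμd⟩ := hμ
        have hle := hsupp μ hμs
        have hq := S7.rowLen_le_of_le_rect hle 0
        have heq := S7.eq_twoRow_of_le_rect hle
        constructor
        · rw [Finset.mem_range]
          omega
        · rw [← hμd, ← heq]
          exact hμs
      · intro t ht
        rw [Finset.mem_filter] at ht ⊢
        refine ⟨ht.2, ?_⟩
        rw [S7.rowLen0_twoRow, S7.rowLen1_twoRow (by omega)]
      · intro μ hμ
        rw [Finset.mem_filter] at hμ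
        obtain ⟨hμs, hμd⟩ := hμ
        have heq := S7.eq_twoRow_of_le_rect (hsupp μ hμs)
        rw [hμd] at heq
        exact heq.symm
      · intro t ht
        rw [S7.rowLen1_twoRow (Nat.le_add_right t d)]
      · intro μ hμ
        rw [Finset.mem_filter] at hμ
        obtain ⟨hμs, hμd⟩ := hμ
        have hle := hsupp μ hμs
        have hq := S7.rowLen_le_of_le_rect hle 0
        have heq := S7.eq_twoRow_of_le_rect hle
        conv_lhs => rw [heq, hμd]
        rw [S7.coeff_prod_twoRow (by omega) hq']
    -- symmetry of the coefficients
    have hsymm : ∀ t, t ≤ b - d → g (S7.twoRow (b - d - t + d) (b - d - t))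
        = g (S7.twoRow (t + d) t) := by
      intro t ht
      have hq : t + d ≤ b := by omega
      have h1 := hsym (S7.twoRow (t + d) t) (S7.twoRow_le_rect (by omega))
      rw [S7.rectCompl_twoRow hq] at h1
      rw [show b - t = b - d - t + d by omega, show b - d - t + d - d = b - d - t by omega] at h1
      exact h1
    -- apply the inversion lemma
    have hinv := S7.inversion (b - d) (fun t => g (S7.twoRow (t + d) t)) hsymm hrel
    -- conclude
    have hq0 : μ0.rowLen 1 ≤ b - d := by
      have := S7.rowLen_le_of_le_rect (hsupp μ0 hμ0) 0
      have := S7.rowLen1_le_rowLen0 μ0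
      omega
    have heq0 := S7.eq_twoRow_of_le_rect (hsupp μ0 hμ0)
    have hrow0 : μ0.rowLen 0 = μ0.rowLen 1 + d := by
      have := S7.rowLen1_le_rowLen0 μ0
      omega
    rw [hrow0] at heq0
    have hfin := hinv (μ0.rowLen 1) hq0
    rw [← heq0] at hfin
    exact Finsupp.mem_support_iff.mp hμ0 hfin
end
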